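/- arXiv:2510.17607 — 9 statements merged into one kernel-verified Lean document; each statement's English description precedes it below -/
import Mathlib

section
/- Let (C,d) be a nonarchimedean normed chain complex over K, where the absolute value of K is surjective onto the positive reals. Then the boundary depth equals the supremum of the torsion exponents of the homology of the subcomplex of elements of norm less than 1: β(C,d) = sup{τ(x) : x a nonzero torsion class in H(C_{>0})}, where the supremum of the empty set is taken to be 0 and both sides may equal +∞. -/
/-!
For a boundary `x` let `λ(x)` (`primitiveNorm d x`) be the infimum of `‖y‖` over `d y = x`.
The inner infimum in `β` at `x` is `log λ(x) - log ‖x‖`, and `λ(a • x) = ‖a‖ λ(x)`. A boundary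
lies in `d(C_{>0})` iff `λ(x) < 1`, so the nonzero torsion classes are the boundaries with
`‖x‖ < 1 ≤ λ(x)`, and the torsion exponent of such a class is `log λ(x)`: the extremal `a` has
`‖a‖ = λ(x)⁻¹`. Since `log ‖x‖ < 0` on torsion classes, `τ ≤ β`. Conversely, rescaling a
boundary `x` by a scalar of norm `e ^ r / λ(x)` with `r < log λ(x) - log ‖x‖` yields a torsion
class of exponent exactly `r`; surjectivity of the absolute value provides the scalar.
-/

open scoped ENNReal

open Classical in
/-- The boundary depth `β(C,d) ∈ [0,∞]` of a norm-nonincreasing differential `d` on a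
nonarchimedean normed chain complex `C`: with `val x := -Real.log ‖x‖`, it equals
`sup` over nonzero `x` in the range of `d` of `inf {val x - val y : d y = x}` when
`d ≠ 0`, and `0` when `d = 0`. -/
noncomputable def boundaryDepth {C : Type*} [NormedAddCommGroup C] (d : C → C) : ℝ≥0∞ :=
  if ∀ x, d x = 0 then 0
  else
    ⨆ x ∈ {x : C | x ≠ 0 ∧ ∃ y, d y = x},
      ⨅ y ∈ {y : C | d y = x}, ENNReal.ofReal (Real.log ‖y‖ - Real.log ‖x‖)

noncomputable def primitiveNorm {E F 𝓕 : Type*} [Norm E] [FunLike 𝓕 E F] (f : 𝓕) (x : F) : ℝ :=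
  sInf (norm '' (f ⁻¹' {x}))

section PrimitiveNorm

variable {E F 𝓕 : Type*} [SeminormedAddCommGroup E] [FunLike 𝓕 E F] {f : 𝓕} {x : F}

theorem bddBelow_norm_preimage (f : 𝓕) (x : F) : BddBelow (norm '' (f ⁻¹' {x})) :=
  ⟨0, by rintro _ ⟨y, -, rfl⟩; exact norm_nonneg y⟩

theorem primitiveNorm_le_norm {y : E} (hy : f y = x) : primitiveNorm f x ≤ ‖y‖ :=
  csInf_le (bddBelow_norm_preimage f x) ⟨y, hy, rfl⟩

theorem mem_image_norm_lt_iff (hx : x ∈ Set.range f) {r : ℝ} :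
    x ∈ f '' {y | ‖y‖ < r} ↔ primitiveNorm f x < r := by
  refine ⟨?_, fun hr => ?_⟩
  · rintro ⟨y, hyr, hy⟩
    exact (primitiveNorm_le_norm hy).trans_lt hyr
  · obtain ⟨z, hz⟩ := hx
    obtain ⟨_, ⟨y, hy, rfl⟩, hyr⟩ :=
      exists_lt_of_csInf_lt (⟨‖z‖, z, hz, rfl⟩ : (norm '' (f ⁻¹' {x})).Nonempty) hr
    exact ⟨y, hyr, hy⟩

variable [SeminormedAddCommGroup F]

theorem norm_le_primitiveNorm (hf : ∀ y, ‖f y‖ ≤ ‖y‖) (hx : x ∈ Set.range f) :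
    ‖x‖ ≤ primitiveNorm f x := by
  obtain ⟨z, hz⟩ := hx
  exact le_csInf ⟨‖z‖, z, hz, rfl⟩ (by rintro _ ⟨y, rfl, rfl⟩; exact hf y)

theorem iInf_ofReal_log_norm_sub_eq (hf : ∀ y, ‖f y‖ ≤ ‖y‖) (hx : x ∈ Set.range f)
    (hx0 : 0 < ‖x‖) :
    ⨅ y ∈ {y | f y = x}, ENNReal.ofReal (Real.log ‖y‖ - Real.log ‖x‖) =
      ENNReal.ofReal (Real.log (primitiveNorm f x) - Real.log ‖x‖) := by
  set g : ℝ → ℝ≥0∞ := fun t => ENNReal.ofReal (Real.log t - Real.log ‖x‖)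
  have hpos : ∀ t ∈ norm '' (f ⁻¹' {x}), 0 < t := by
    rintro _ ⟨y, rfl, rfl⟩
    exact hx0.trans_le (hf y)
  have hprim_pos : 0 < primitiveNorm f x := hx0.trans_le (norm_le_primitiveNorm hf hx)
  have hg_mono : MonotoneOn g (norm '' (f ⁻¹' {x})) := fun s hs t ht hst =>
    ENNReal.ofReal_le_ofReal (sub_le_sub_right (Real.log_le_log (hpos s hs) hst) _)
  have hg_cont : ContinuousAt g (primitiveNorm f x) :=
    ENNReal.continuous_ofReal.continuousAt.comp
      ((Real.continuousAt_log hprim_pos.ne').sub continuousAt_const)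
  obtain ⟨z, hz⟩ := hx
  calc ⨅ y ∈ {y | f y = x}, ENNReal.ofReal (Real.log ‖y‖ - Real.log ‖x‖)
      = sInf (g '' (norm '' (f ⁻¹' {x}))) := by rw [sInf_image, iInf_image]; rfl
    _ = g (primitiveNorm f x) := (hg_mono.map_csInf_of_continuousWithinAt
      hg_cont.continuousWithinAt ⟨‖z‖, z, hz, rfl⟩ (bddBelow_norm_preimage f x)).symm

end PrimitiveNorm

theorem boundaryDepth_eq_iSup_log_primitiveNorm {C 𝓕 : Type*} [NormedAddCommGroup C]
    [FunLike 𝓕 C C] {d : 𝓕} (hd1 : ∀ y, ‖d y‖ ≤ ‖y‖) :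
    boundaryDepth d = ⨆ x ∈ {x : C | x ≠ 0 ∧ x ∈ Set.range d},
      ENNReal.ofReal (Real.log (primitiveNorm d x) - Real.log ‖x‖) := by
  rw [boundaryDepth]
  split_ifs with hd
  · refine (iSup₂_eq_bot.2 ?_).symm
    rintro x ⟨hx0, y, rfl⟩
    exact absurd (hd y) hx0
  · exact biSup_congr fun x hx => iInf_ofReal_log_norm_sub_eq hd1 hx.2 (norm_pos_iff.2 hx.1)

section Scaling

variable {K E F 𝓕 : Type*} [NormedField K] [SeminormedAddCommGroup E] [NormedSpace K E]
  [AddCommGroup F] [Module K F] [FunLike 𝓕 E F] [LinearMapClass 𝓕 K E F] {f : 𝓕} {x : F} {a : K}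

open scoped Pointwise in
theorem primitiveNorm_smul (f : 𝓕) (ha : a ≠ 0) (x : F) :
    primitiveNorm f (a • x) = ‖a‖ * primitiveNorm f x := by
  have hpre : f ⁻¹' {a • x} = a • f ⁻¹' {x} := by
    ext y
    simp [Set.mem_smul_set_iff_inv_smul_mem₀ ha, inv_smul_eq_iff₀ ha]
  rw [primitiveNorm, primitiveNorm, hpre, ← Set.image_smul, Set.image_image, ← smul_eq_mul,
    ← Real.sInf_smul_of_nonneg (norm_nonneg a), ← Set.image_smul, Set.image_image]
  simp_rw [norm_smul, smul_eq_mul]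

theorem smul_mem_range (hx : x ∈ Set.range f) : a • x ∈ Set.range f := by
  obtain ⟨z, rfl⟩ := hx
  exact ⟨a • z, map_smul f a z⟩

theorem smul_mem_image_norm_lt_iff (ha : a ≠ 0) (hx : x ∈ Set.range f) {r : ℝ} :
    a • x ∈ f '' {y | ‖y‖ < r} ↔ ‖a‖ * primitiveNorm f x < r := by
  rw [mem_image_norm_lt_iff (smul_mem_range hx), primitiveNorm_smul f ha]

end Scaling

noncomputable def torsionExponent (K : Type*) {E F 𝓕 : Type*} [NormedField K] [Norm E] [SMul K F]
    [FunLike 𝓕 E F] (f : 𝓕) (x : F) : ℝ≥0∞ :=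
  ⨆ a ∈ {a : K | a ≠ 0 ∧ ‖a‖ ≤ 1 ∧ a • x ∉ f '' {y | ‖y‖ < 1}}, ENNReal.ofReal (-Real.log ‖a‖)

def torsionCycles (K : Type*) {C 𝓕 : Type*} [NormedField K] [SeminormedAddCommGroup C] [SMul K C]
    [FunLike 𝓕 C C] (d : 𝓕) : Set C :=
  {x | ‖x‖ < 1 ∧ d x = 0 ∧ x ∉ d '' {y | ‖y‖ < 1} ∧
    ∃ a : K, a ≠ 0 ∧ ‖a‖ ≤ 1 ∧ a • x ∈ d '' {y | ‖y‖ < 1}}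

section Torsion

variable {K : Type*} [NormedField K] (hsurj : ∀ r : ℝ, 0 < r → ∃ a : K, ‖a‖ = r)
include hsurj

theorem torsionExponent_eq {E F 𝓕 : Type*} [SeminormedAddCommGroup E] [NormedSpace K E]
    [AddCommGroup F] [Module K F] [FunLike 𝓕 E F] [LinearMapClass 𝓕 K E F] {f : 𝓕} {x : F}
    (hx : x ∈ Set.range f) (h1 : 1 ≤ primitiveNorm f x) :
    torsionExponent K f x = ENNReal.ofReal (Real.log (primitiveNorm f x)) := by
  have hpos : 0 < primitiveNorm f x := one_pos.trans_le h1
  refine le_antisymm (iSup₂_le fun a ha => ?_) ?_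
  · obtain ⟨ha0, -, haB⟩ := ha
    rw [smul_mem_image_norm_lt_iff ha0 hx, not_lt, ← inv_le_iff_one_le_mul₀' (norm_pos_iff.2 ha0)]
      at haB
    rw [← Real.log_inv]
    exact ENNReal.ofReal_le_ofReal (Real.log_le_log (by positivity) haB)
  · obtain ⟨a, ha⟩ := hsurj _ (inv_pos.2 hpos)
    have ha0 : a ≠ 0 := norm_pos_iff.1 (ha ▸ inv_pos.2 hpos)
    refine le_iSup₂_of_le (f := fun (a : K) _ => ENNReal.ofReal (-Real.log ‖a‖)) a
      ⟨ha0, ha ▸ inv_le_one_of_one_le₀ h1, ?_⟩ (by rw [ha, Real.log_inv, neg_neg])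
    rw [smul_mem_image_norm_lt_iff ha0 hx, ha, inv_mul_cancel₀ hpos.ne']
    exact lt_irrefl 1

variable {C 𝓕 : Type*} [NormedAddCommGroup C] [NormedSpace K C] [FunLike 𝓕 C C]
  [LinearMapClass 𝓕 K C C] {d : 𝓕} (hd2 : ∀ x, d (d x) = 0)
include hd2

theorem mem_torsionCycles_iff {x : C} :
    x ∈ torsionCycles K d ↔ ‖x‖ < 1 ∧ x ∈ Set.range d ∧ 1 ≤ primitiveNorm d x := by
  constructor
  · rintro ⟨hx1, -, hxB, b, hb0, -, y, -, hy⟩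
    have hx : x ∈ Set.range d := ⟨b⁻¹ • y, by rw [map_smul, hy, inv_smul_smul₀ hb0]⟩
    exact ⟨hx1, hx, not_lt.1 ((mem_image_norm_lt_iff hx).not.1 hxB)⟩
  · rintro ⟨hx1, hx, h1⟩
    have hpos : 0 < primitiveNorm d x + 1 := by linarith
    obtain ⟨b, hb⟩ := hsurj _ (inv_pos.2 hpos)
    have hb0 : b ≠ 0 := norm_pos_iff.1 (hb ▸ inv_pos.2 hpos)
    refine ⟨hx1, ?_, (mem_image_norm_lt_iff hx).not.2 (not_lt.2 h1), b, hb0, ?_, ?_⟩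
    · obtain ⟨z, rfl⟩ := hx
      exact hd2 z
    · exact hb ▸ inv_le_one_of_one_le₀ (by linarith)
    · rw [smul_mem_image_norm_lt_iff hb0 hx, hb, inv_mul_lt_iff₀ hpos]
      linarith

theorem ofReal_log_primitiveNorm_sub_le_iSup (hd1 : ∀ y, ‖d y‖ ≤ ‖y‖) {x : C}
    (hx : x ∈ Set.range d) (hx0 : x ≠ 0) :
    ENNReal.ofReal (Real.log (primitiveNorm d x) - Real.log ‖x‖) ≤
      ⨆ x' ∈ torsionCycles K d, ENNReal.ofReal (Real.log (primitiveNorm d x')) := by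
  have hxpos : 0 < ‖x‖ := norm_pos_iff.2 hx0
  have hpos : 0 < primitiveNorm d x := hxpos.trans_le (norm_le_primitiveNorm hd1 hx)
  refine ENNReal.le_of_forall_nnreal_lt fun r hr => ?_
  have hrx : Real.exp r * ‖x‖ < primitiveNorm d x := by
    have hlog : r + Real.log ‖x‖ < Real.log (primitiveNorm d x) := by
      linarith [ENNReal.coe_lt_ofReal.1 hr]
    simpa only [Real.exp_add, Real.exp_log hxpos, Real.exp_log hpos] using Real.exp_lt_exp.2 hlog
  obtain ⟨c, hc⟩ := hsurj (Real.exp r / primitiveNorm d x) (by positivity)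
  have hc0 : c ≠ 0 := norm_pos_iff.1 (hc ▸ by positivity)
  have hcx : primitiveNorm d (c • x) = Real.exp r := by
    rw [primitiveNorm_smul d hc0, hc, div_mul_cancel₀ _ hpos.ne']
  have hmem : c • x ∈ torsionCycles K d := by
    refine (mem_torsionCycles_iff hsurj hd2).2 ⟨?_, smul_mem_range hx, hcx ▸ Real.one_le_exp r.2⟩
    rwa [norm_smul, hc, div_mul_eq_mul_div, div_lt_one hpos]
  calc (r : ℝ≥0∞) = ENNReal.ofReal (Real.log (primitiveNorm d (c • x))) := by
        rw [hcx, Real.log_exp, ENNReal.ofReal_coe_nnreal]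
    _ ≤ _ := le_iSup₂_of_le (f := fun x' _ => ENNReal.ofReal (Real.log (primitiveNorm d x')))
        (c • x) hmem le_rfl

end Torsion

theorem boundaryDepth_eq_iSup_torsion_exponent_general
    {K : Type*} [NormedField K]
    (hsurj : ∀ r : ℝ, 0 < r → ∃ a : K, ‖a‖ = r)
    {C : Type*} [NormedAddCommGroup C] [NormedSpace K C]
    (d : C →L[K] C) (hd2 : ∀ x, d (d x) = 0) (hd1 : ∀ x, ‖d x‖ ≤ ‖x‖) :
    boundaryDepth (fun x => d x) =
      ⨆ x ∈ {x : C | ‖x‖ < 1 ∧ d x = 0 ∧ x ∉ ⇑d '' {y : C | ‖y‖ < 1} ∧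
          ∃ a : K, a ≠ 0 ∧ ‖a‖ ≤ 1 ∧ a • x ∈ ⇑d '' {y : C | ‖y‖ < 1}},
        ⨆ a ∈ {a : K | a ≠ 0 ∧ ‖a‖ ≤ 1 ∧ a • x ∉ ⇑d '' {y : C | ‖y‖ < 1}},
          ENNReal.ofReal (-Real.log ‖a‖) := by
  calc boundaryDepth (fun x => d x)
      = ⨆ x ∈ {x : C | x ≠ 0 ∧ x ∈ Set.range d},
          ENNReal.ofReal (Real.log (primitiveNorm d x) - Real.log ‖x‖) :=
        boundaryDepth_eq_iSup_log_primitiveNorm hd1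
    _ = ⨆ x ∈ torsionCycles K d, ENNReal.ofReal (Real.log (primitiveNorm d x)) := by
        refine le_antisymm (iSup₂_le fun x hx =>
          ofReal_log_primitiveNorm_sub_le_iSup hsurj hd2 hd1 hx.2 hx.1) (iSup₂_le fun x hx => ?_)
        have hx0 : x ≠ 0 := by
          rintro rfl
          exact hx.2.2.1 ⟨0, by simp, map_zero d⟩
        obtain ⟨hx1, hxd, -⟩ := (mem_torsionCycles_iff hsurj hd2).1 hx
        refine le_iSup₂_of_le (f := fun x _ => ENNReal.ofReal
          (Real.log (primitiveNorm d x) - Real.log ‖x‖)) x ⟨hx0, hxd⟩ (ENNReal.ofReal_le_ofReal ?_)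
        linarith [Real.log_neg (norm_pos_iff.2 hx0) hx1]
    _ = _ := biSup_congr fun x hx =>
        (torsionExponent_eq hsurj ((mem_torsionCycles_iff hsurj hd2).1 hx).2.1
          ((mem_torsionCycles_iff hsurj hd2).1 hx).2.2).symm

/-- For a nonarchimedean normed chain complex `(C,d)` over a complete
nonarchimedean field `K` whose absolute value is surjective onto the positive reals,
the boundary depth equals the supremum of the torsion exponents of nonzero torsion
classes in `H(C_{>0}) = (ker d ∩ C_{>0}) / d(C_{>0})` (classes are represented by cycles
`x` with `‖x‖ < 1`; the class of `x` is nonzero iff `x ∉ d(C_{>0})`, it is torsion iff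
`a • x ∈ d(C_{>0})` for some nonzero `a` with `‖a‖ ≤ 1`, and its torsion exponent is
`sup {-log ‖a‖ : a ≠ 0, ‖a‖ ≤ 1, a • x ∉ d(C_{>0})}`). The supremum of the empty set
is `0`, and both sides may equal `+∞`. -/
theorem boundaryDepth_eq_iSup_torsion_exponent
    {K : Type*} [NormedField K] [IsUltrametricDist K] [CompleteSpace K]
    (hsurj : ∀ r : ℝ, 0 < r → ∃ a : K, ‖a‖ = r)
    {C : Type*} [NormedAddCommGroup C] [NormedSpace K C] [CompleteSpace C]
    [IsUltrametricDist C]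
    (d : C →L[K] C) (hd2 : ∀ x, d (d x) = 0) (hd1 : ∀ x, ‖d x‖ ≤ ‖x‖) :
    boundaryDepth (fun x => d x) =
      ⨆ x ∈ {x : C | ‖x‖ < 1 ∧ d x = 0 ∧ x ∉ ⇑d '' {y : C | ‖y‖ < 1} ∧
          ∃ a : K, a ≠ 0 ∧ ‖a‖ ≤ 1 ∧ a • x ∈ ⇑d '' {y : C | ‖y‖ < 1}},
        ⨆ a ∈ {a : K | a ≠ 0 ∧ ‖a‖ ≤ 1 ∧ a • x ∉ ⇑d '' {y : C | ‖y‖ < 1}},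
          ENNReal.ofReal (-Real.log ‖a‖) :=
  boundaryDepth_eq_iSup_torsion_exponent_general hsurj d hd2 hd1
end

section
/- Let (C,d) be a nonarchimedean normed chain complex over K, where the absolute value of K is surjective onto the positive reals. If the O-module H(C_{>0}) is torsion-free (its only torsion class is 0), then the boundary depth vanishes: β(C,d) = 0. -/
open scoped ENNReal

/-!
Scaling is the whole argument. Every boundary `d y` becomes a torsion class of `H(C_{>0})` once
multiplied by a small enough nonzero scalar, so torsion-freeness says that every boundary of norm
`< 1` has a primitive of norm `< 1`. Given a boundary `x` and `r > ‖x‖`, rescale `x` by a scalar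
of norm `r⁻¹` (surjectivity of the absolute value), take such a primitive and scale back: this
gives a primitive of norm `< r`, so the boundary depth is `0`.
-/

section

variable {K C F : Type*} [NormedField K]

theorem exists_ne_zero_norm_le_one_norm_smul_lt_one [SeminormedAddCommGroup C] [NormedSpace K C]
    (hsurj : ∀ r : ℝ, 0 < r → ∃ a : K, ‖a‖ = r) (v : C) :
    ∃ b : K, b ≠ 0 ∧ ‖b‖ ≤ 1 ∧ ‖b • v‖ < 1 := by
  obtain ⟨b, hb⟩ := hsurj (‖v‖ + 1)⁻¹ (by positivity)
  refine ⟨b, ?_, ?_, ?_⟩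
  · rw [← norm_pos_iff, hb]
    positivity
  · rw [hb]
    exact inv_le_one_of_one_le₀ (by linarith [norm_nonneg v])
  · rw [norm_smul, hb, inv_mul_lt_iff₀ (by positivity)]
    linarith

variable [NormedAddCommGroup C] [NormedSpace K C] [FunLike F C C] [LinearMapClass F K C C]

theorem apply_mem_image_unitBall_of_torsionFree (hsurj : ∀ r : ℝ, 0 < r → ∃ a : K, ‖a‖ = r)
    {d : F} (hd2 : ∀ x, d (d x) = 0)
    (htf : ∀ x : C, ‖x‖ < 1 → d x = 0 →
      (∃ a : K, a ≠ 0 ∧ ‖a‖ ≤ 1 ∧ a • x ∈ ⇑d '' {y : C | ‖y‖ < 1}) →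
      x ∈ ⇑d '' {y : C | ‖y‖ < 1})
    {y : C} (hy : ‖d y‖ < 1) : d y ∈ ⇑d '' {z : C | ‖z‖ < 1} := by
  obtain ⟨b, hb0, hb1, hby⟩ := exists_ne_zero_norm_le_one_norm_smul_lt_one hsurj y
  exact htf _ hy (hd2 y) ⟨b, hb0, hb1, b • y, hby, map_smul d b y⟩

theorem exists_apply_eq_norm_lt_of_forall_mem_image_unitBall
    (hsurj : ∀ r : ℝ, 0 < r → ∃ a : K, ‖a‖ = r) {d : F}
    (hball : ∀ y : C, ‖d y‖ < 1 → d y ∈ ⇑d '' {z : C | ‖z‖ < 1})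
    {y : C} {r : ℝ} (hr : ‖d y‖ < r) : ∃ y' : C, d y' = d y ∧ ‖y'‖ < r := by
  have hr0 : 0 < r := (norm_nonneg _).trans_lt hr
  obtain ⟨a, ha⟩ := hsurj r⁻¹ (inv_pos.2 hr0)
  have ha0 : a ≠ 0 := by
    rw [← norm_pos_iff, ha]
    positivity
  have hay : ‖d (a • y)‖ < 1 := by
    rw [map_smul, norm_smul, ha, inv_mul_lt_iff₀ hr0, mul_one]
    exact hr
  obtain ⟨z, hz1, hz⟩ := hball _ hay
  refine ⟨a⁻¹ • z, ?_, ?_⟩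
  · rw [map_smul, hz, map_smul, smul_smul, inv_mul_cancel₀ ha0, one_smul]
  · rw [norm_smul, norm_inv, ha, inv_inv]
    exact mul_lt_of_lt_one_right hr0 hz1

end

theorem boundaryDepth_eq_zero_of_forall_exists_norm_lt {C F : Type*} [NormedAddCommGroup C]
    [FunLike F C C] [AddMonoidHomClass F C C] (d : F)
    (h : ∀ (y : C) (r : ℝ), ‖d y‖ < r → ∃ y' : C, d y' = d y ∧ ‖y'‖ < r) :
    boundaryDepth d = 0 := by
  unfold boundaryDepth
  split_ifs
  · rfl
  refine le_antisymm (iSup₂_le ?_) zero_le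
  rintro _ ⟨hx0, y, rfl⟩
  refine ENNReal.le_of_forall_pos_le_add fun ε hε _ => ?_
  have hx : 0 < ‖d y‖ := norm_pos_iff.2 hx0
  obtain ⟨y', hy', hy'r⟩ :=
    h y (‖d y‖ * Real.exp ε) (lt_mul_of_one_lt_right hx (Real.one_lt_exp_iff.2 hε))
  have hy'0 : 0 < ‖y'‖ := norm_pos_iff.2 fun h0 => hx0 (by rw [← hy', h0, map_zero])
  have hlog : Real.log ‖y'‖ - Real.log ‖d y‖ ≤ ε := by
    have := Real.log_lt_log hy'0 hy'r
    rw [Real.log_mul hx.ne' (Real.exp_pos _).ne', Real.log_exp] at this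
    linarith
  calc ⨅ y'' ∈ {y'' : C | d y'' = d y}, ENNReal.ofReal (Real.log ‖y''‖ - Real.log ‖d y‖)
      ≤ ENNReal.ofReal (Real.log ‖y'‖ - Real.log ‖d y‖) := biInf_le _ hy'
    _ ≤ ENNReal.ofReal ε := ENNReal.ofReal_le_ofReal hlog
    _ = 0 + ε := by rw [zero_add, ENNReal.ofReal_coe_nnreal]

theorem boundaryDepth_eq_zero_of_torsionFree_general
    {K : Type*} [NormedField K]
    (hsurj : ∀ r : ℝ, 0 < r → ∃ a : K, ‖a‖ = r)
    {C : Type*} [NormedAddCommGroup C] [NormedSpace K C]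
    (d : C →L[K] C) (hd2 : ∀ x, d (d x) = 0)
    (htf : ∀ x : C, ‖x‖ < 1 → d x = 0 →
      (∃ a : K, a ≠ 0 ∧ ‖a‖ ≤ 1 ∧ a • x ∈ ⇑d '' {y : C | ‖y‖ < 1}) →
      x ∈ ⇑d '' {y : C | ‖y‖ < 1}) :
    boundaryDepth (fun x => d x) = 0 :=
  boundaryDepth_eq_zero_of_forall_exists_norm_lt d fun _ _ hr =>
    exists_apply_eq_norm_lt_of_forall_mem_image_unitBall hsurj
      (fun _ hy => apply_mem_image_unitBall_of_torsionFree hsurj hd2 htf hy) hr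

/-- If, for a nonarchimedean normed chain complex `(C,d)` over a complete
nonarchimedean field `K` whose absolute value is surjective onto the positive reals, the
`O`-module `H(C_{>0}) = (ker d ∩ C_{>0}) / d(C_{>0})` is torsion-free (every torsion class
is zero, i.e. every cycle `x` with `‖x‖ < 1` such that `a • x ∈ d(C_{>0})` for some nonzero
`a` with `‖a‖ ≤ 1` already lies in `d(C_{>0})`), then the boundary depth vanishes. -/
theorem boundaryDepth_eq_zero_of_torsionFree
    {K : Type*} [NormedField K] [IsUltrametricDist K] [CompleteSpace K]
    (hsurj : ∀ r : ℝ, 0 < r → ∃ a : K, ‖a‖ = r)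
    {C : Type*} [NormedAddCommGroup C] [NormedSpace K C] [CompleteSpace C]
    [IsUltrametricDist C]
    (d : C →L[K] C) (hd2 : ∀ x, d (d x) = 0) (hd1 : ∀ x, ‖d x‖ ≤ ‖x‖)
    (htf : ∀ x : C, ‖x‖ < 1 → d x = 0 →
      (∃ a : K, a ≠ 0 ∧ ‖a‖ ≤ 1 ∧ a • x ∈ ⇑d '' {y : C | ‖y‖ < 1}) →
      x ∈ ⇑d '' {y : C | ‖y‖ < 1}) :
    boundaryDepth (fun x => d x) = 0 :=
  boundaryDepth_eq_zero_of_torsionFree_general hsurj d hd2 htf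
end

section
/- Let (C,d) be a nonarchimedean normed chain complex over K with finite boundary depth β(C,d) < ∞. Then the range of d is a closed subspace of C; consequently the homology ker d / range d, equipped with the quotient norm, is itself a nonarchimedean Banach space over K. -/
open scoped ENNReal

/-- The homology `ker d / range d` of a chain complex `(C,d)`, formed as the quotient of
the kernel of `d` by the range of `d` (viewed inside the kernel); it carries the quotient
(semi)norm. -/
abbrev homologyOf {K : Type*} [NormedField K] {C : Type*} [NormedAddCommGroup C]
    [NormedSpace K C] (d : C →L[K] C) : Type _ :=
  ↥(LinearMap.ker (d : C →ₗ[K] C)) ⧸ Submodule.comap (LinearMap.ker (d : C →ₗ[K] C)).subtype (LinearMap.range (d : C →ₗ[K] C))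

/-!
A finite boundary depth `β` means every boundary `x` has a primitive `y` with
`‖y‖ ≤ e^(β+1) ‖x‖`. Such a uniform control lets one solve `dy = x` for limits `x` of
boundaries by a convergent series of corrections (`controlled_closure_of_complete`), so the
boundaries form a closed subspace. The quotient of the (complete) cycles by a closed subspace
is then a Banach space, and the ultrametric inequality passes to quotient norms.
-/

section BoundaryDepth

variable {C : Type*} [NormedAddCommGroup C] {d : C → C}

lemma iInf_le_boundaryDepth {x : C} (hx0 : x ≠ 0) (hx : x ∈ Set.range d) :
    ⨅ y ∈ {y : C | d y = x}, ENNReal.ofReal (Real.log ‖y‖ - Real.log ‖x‖) ≤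
      boundaryDepth d := by
  obtain ⟨y, rfl⟩ := hx
  rw [boundaryDepth, if_neg fun h => hx0 (h y)]
  exact le_iSup₂_of_le (d y) ⟨hx0, y, rfl⟩ le_rfl

lemma exists_preimage_norm_lt_of_boundaryDepth_lt_top (hβ : boundaryDepth d < ⊤) {x : C}
    (hx0 : x ≠ 0) (hx : x ∈ Set.range d) :
    ∃ y, d y = x ∧ ‖y‖ < Real.exp ((boundaryDepth d).toReal + 1) * ‖x‖ := by
  set b := (boundaryDepth d).toReal
  have hlt : ⨅ y ∈ {y : C | d y = x}, ENNReal.ofReal (Real.log ‖y‖ - Real.log ‖x‖) <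
      ENNReal.ofReal (b + 1) := by
    rw [ENNReal.ofReal_add ENNReal.toReal_nonneg zero_le_one, ENNReal.ofReal_toReal hβ.ne,
      ENNReal.ofReal_one]
    exact (iInf_le_boundaryDepth hx0 hx).trans_lt (ENNReal.lt_add_right hβ.ne one_ne_zero)
  simp only [iInf_lt_iff, Set.mem_ofPred_eq] at hlt
  obtain ⟨y, hyx, hlog⟩ := hlt
  refine ⟨y, hyx, ?_⟩
  have hx_pos : 0 < ‖x‖ := norm_pos_iff.mpr hx0
  rcases (norm_nonneg y).eq_or_lt with hy | hy
  · rw [← hy]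
    positivity
  have hlog' := (ENNReal.ofReal_lt_ofReal_iff'.mp hlog).1
  calc ‖y‖ = Real.exp (Real.log ‖y‖) := (Real.exp_log hy).symm
    _ < Real.exp (b + 1 + Real.log ‖x‖) := Real.exp_lt_exp.mpr (by linarith)
    _ = Real.exp (b + 1) * ‖x‖ := by rw [Real.exp_add, Real.exp_log hx_pos]

lemma exists_preimage_norm_le_of_boundaryDepth_lt_top (hd0 : d 0 = 0)
    (hβ : boundaryDepth d < ⊤) :
    ∃ M > 0, ∀ x ∈ Set.range d, ∃ y, d y = x ∧ ‖y‖ ≤ M * ‖x‖ := by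
  refine ⟨Real.exp ((boundaryDepth d).toReal + 1), Real.exp_pos _, fun x hx => ?_⟩
  rcases eq_or_ne x 0 with rfl | hx0
  · exact ⟨0, hd0, by simp⟩
  obtain ⟨y, hyx, hy⟩ := exists_preimage_norm_lt_of_boundaryDepth_lt_top hβ hx0 hx
  exact ⟨y, hyx, hy.le⟩

end BoundaryDepth

theorem NormedAddGroupHom.isClosed_range_of_surjectiveOnWith {G H : Type*}
    [NormedAddCommGroup G] [CompleteSpace G] [NormedAddCommGroup H]
    {f : NormedAddGroupHom G H} {M : ℝ} (hM : 0 < M) (hf : f.SurjectiveOnWith f.range M) :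
    IsClosed (f.range : Set H) := by
  refine isClosed_of_closure_subset fun h hh => ?_
  obtain ⟨g, rfl, -⟩ := controlled_closure_of_complete hM one_pos hf h hh
  exact f.mem_range_self g

instance Submodule.Quotient.isUltrametricDist {R M : Type*} [Ring R] [SeminormedAddCommGroup M]
    [Module R M] [IsUltrametricDist M] (S : Submodule R M) : IsUltrametricDist (M ⧸ S) := by
  refine IsUltrametricDist.isUltrametricDist_of_forall_norm_add_le_max_norm fun z w => ?_
  refine le_of_forall_pos_le_add fun ε hε => ?_
  obtain ⟨m, rfl, hm⟩ := Submodule.Quotient.norm_mk_lt z hε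
  obtain ⟨n, rfl, hn⟩ := Submodule.Quotient.norm_mk_lt w hε
  calc ‖S.mkQ m + S.mkQ n‖ ≤ ‖m + n‖ := Submodule.Quotient.norm_mk_le S (m + n)
    _ ≤ max ‖m‖ ‖n‖ := IsUltrametricDist.norm_add_le_max m n
    _ ≤ max (‖S.mkQ m‖ + ε) (‖S.mkQ n‖ + ε) := max_le_max hm.le hn.le
    _ = max ‖S.mkQ m‖ ‖S.mkQ n‖ + ε := max_add_add_right _ _ _

theorem isClosed_range_of_finite_boundaryDepth_general
    {K : Type*} [NormedField K]
    {C : Type*} [NormedAddCommGroup C] [NormedSpace K C] [CompleteSpace C]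
    [IsUltrametricDist C]
    (d : C →L[K] C) (hd1 : ∀ x, ‖d x‖ ≤ ‖x‖)
    (hfin : boundaryDepth (fun x => d x) < ⊤) :
    IsClosed (Set.range fun x : C => d x) ∧
    (∀ z : homologyOf d, ‖z‖ = 0 → z = 0) ∧
    (∀ z w : homologyOf d, ‖z + w‖ ≤ max ‖z‖ ‖w‖) ∧
    (∀ (a : K) (z : homologyOf d), ‖a • z‖ = ‖a‖ * ‖z‖) ∧
    CompleteSpace (homologyOf d) := by
  obtain ⟨M, hM, hsurj⟩ := exists_preimage_norm_le_of_boundaryDepth_lt_top (map_zero d) hfin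
  let f : NormedAddGroupHom C C := (d : C →+ C).mkNormedAddGroupHom 1 (by simpa using hd1)
  have hclosed : IsClosed (Set.range fun x : C => d x) :=
    f.isClosed_range_of_surjectiveOnWith hM hsurj
  have : IsClosed ((LinearMap.range (d : C →ₗ[K] C)).comap
      (LinearMap.ker (d : C →ₗ[K] C)).subtype : Set (LinearMap.ker (d : C →ₗ[K] C))) :=
    hclosed.preimage continuous_subtype_val
  exact ⟨hclosed, fun z => norm_eq_zero.mp, IsUltrametricDist.norm_add_le_max, norm_smul,
    inferInstance⟩

/-- If a nonarchimedean normed chain complex `(C,d)` over `K` has finite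
boundary depth, then the range of `d` is closed; consequently the homology
`ker d / range d`, equipped with the quotient norm, is itself a nonarchimedean Banach
space over `K` (the quotient seminorm is a genuine norm, it is nonarchimedean, scalars
act isometrically, and the quotient is complete). -/
theorem isClosed_range_of_finite_boundaryDepth
    {K : Type*} [NormedField K] [IsUltrametricDist K] [CompleteSpace K]
    {C : Type*} [NormedAddCommGroup C] [NormedSpace K C] [CompleteSpace C]
    [IsUltrametricDist C]
    (d : C →L[K] C) (hd2 : ∀ x, d (d x) = 0) (hd1 : ∀ x, ‖d x‖ ≤ ‖x‖)
    (hfin : boundaryDepth (fun x => d x) < ⊤) :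
    IsClosed (Set.range fun x : C => d x) ∧
    (∀ z : homologyOf d, ‖z‖ = 0 → z = 0) ∧
    (∀ z w : homologyOf d, ‖z + w‖ ≤ max ‖z‖ ‖w‖) ∧
    (∀ (a : K) (z : homologyOf d), ‖a • z‖ = ‖a‖ * ‖z‖) ∧
    CompleteSpace (homologyOf d) :=
  isClosed_range_of_finite_boundaryDepth_general d hd1 hfin
end

section
/- Let (G,d) be a countably generated nonarchimedean normed chain complex over K with finite boundary depth β. Then for every r ∈ (0,1) there exist closed subspaces D, B, C of G such that: (i) G = D ⊕ B ⊕ C, i.e. every x ∈ G is uniquely x = x_D + x_B + x_C with x_D ∈ D, x_B ∈ B, x_C ∈ C; (ii) the decomposition is r-orthogonal: ‖x‖ ≥ r·max(‖x_D‖, ‖x_B‖, ‖x_C‖) for all x ∈ G; (iii) ker d = B ⊕ C and B = d(D) = range d; (iv) d restricted to D is injective, and the induced inverse d⁻¹ : B → D satisfies ‖d⁻¹(y)‖ ≤ (1/r)·e^β·‖y‖ for all y ∈ B. -/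
open scoped ENNReal

lemma ContinuousLinearMap.isClosed_range_of_norm_le {K E F : Type*} [NormedField K]
    [NormedAddCommGroup E] [NormedSpace K E] [CompleteSpace E]
    [NormedAddCommGroup F] [NormedSpace K F]
    (f : E →L[K] F) (C : ℝ) (h : ∀ x, ‖x‖ ≤ C * ‖f x‖) : IsClosed (Set.range f) :=
  (f.antilipschitz_of_bound (K := C.toNNReal) fun x =>
    (h x).trans (by gcongr; exact Real.le_coe_toNNReal C)).isClosed_range f.uniformContinuous

lemma ContinuousLinearMap.isClosed_image_of_norm_le {K E F : Type*} [NormedField K]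
    [NormedAddCommGroup E] [NormedSpace K E] [CompleteSpace E]
    [NormedAddCommGroup F] [NormedSpace K F]
    (f : E →L[K] F) {D : Submodule K E} (hD : IsClosed (D : Set E)) (C : ℝ)
    (h : ∀ p ∈ D, ‖p‖ ≤ C * ‖f p‖) : IsClosed (f '' D) := by
  have := hD.completeSpace_coe
  have hrange : Set.range (f.comp D.subtypeL) = f '' D := by
    ext
    simp
  exact hrange ▸ (f.comp D.subtypeL).isClosed_range_of_norm_le C fun p => h p p.2

lemma LinearMap.range_eq_map_of_isCompl_ker {R M N : Type*} [Ring R] [AddCommGroup M]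
    [Module R M] [AddCommGroup N] [Module R N] (f : M →ₗ[R] N) {D : Submodule R M}
    (hD : IsCompl (LinearMap.ker f) D) : LinearMap.range f = D.map f :=
  le_antisymm
    (by rw [LinearMap.range_eq_map, LinearMap.map_le_map_iff, sup_comm, hD.sup_eq_top])
    LinearMap.map_le_range

section ROrthogonal

variable {K : Type*} [NormedField K] {G : Type*} [NormedAddCommGroup G] [NormedSpace K G]

def IsROrthogonal (r : ℝ) (V W : Submodule K G) : Prop :=
  ∀ v ∈ V, ∀ w ∈ W, r * max ‖v‖ ‖w‖ ≤ ‖v + w‖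

namespace IsROrthogonal

variable {r s t : ℝ} {U V W : Submodule K G}

lemma mono (h : IsROrthogonal r V W) (hsr : s ≤ r) : IsROrthogonal s V W := fun v hv w hw =>
  (mul_le_mul_of_nonneg_right hsr ((norm_nonneg v).trans (le_max_left _ _))).trans (h v hv w hw)

lemma mono_right (h : IsROrthogonal r V W) (hUW : U ≤ W) : IsROrthogonal r V U :=
  fun v hv u hu => h v hv u (hUW hu)

lemma bot_right (hr : r ≤ 1) : IsROrthogonal r V ⊥ := by
  intro v _ w hw
  rw [(Submodule.mem_bot K).mp hw, norm_zero, add_zero, max_eq_left (norm_nonneg v)]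
  exact mul_le_of_le_one_left (norm_nonneg v) hr

lemma disjoint (h : IsROrthogonal r V W) (hr : 0 < r) : Disjoint V W := by
  refine Submodule.disjoint_def.mpr fun x hxV hxW => norm_eq_zero.mp ?_
  have := h (-x) (V.neg_mem hxV) x hxW
  rw [neg_add_cancel, norm_zero, norm_neg, max_self] at this
  exact le_antisymm (nonpos_of_mul_nonpos_right this hr) (norm_nonneg x)

lemma topologicalClosure_right (h : IsROrthogonal r V W) :
    IsROrthogonal r V W.topologicalClosure := fun v hv =>
  closure_minimal (h v hv) <| isClosed_le
    (continuous_const.mul (continuous_const.max continuous_norm))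
    (continuous_const.add continuous_id).norm

lemma isClosed_sup [CompleteSpace G] (h : IsROrthogonal r V W) (hr : 0 < r)
    (hV : IsClosed (V : Set G)) (hW : IsClosed (W : Set G)) :
    IsClosed ((V ⊔ W : Submodule K G) : Set G) := by
  have := hV.completeSpace_coe
  have := hW.completeSpace_coe
  have hrange : ((V ⊔ W : Submodule K G) : Set G) = Set.range (V.subtypeL.coprod W.subtypeL) := by
    rw [Submodule.sup_eq_range]; rfl
  rw [hrange]
  refine (V.subtypeL.coprod W.subtypeL).isClosed_range_of_norm_le r⁻¹ fun x => ?_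
  rw [Prod.norm_def, Submodule.coe_norm, Submodule.coe_norm, inv_mul_eq_div, le_div_iff₀' hr]
  exact h _ x.1.2 _ x.2.2

lemma mul_max_le_norm_add_add {B C D : Submodule K G} (hD : IsROrthogonal s (B ⊔ C) D)
    (hBC : IsROrthogonal t B C) (hs : 0 ≤ s) (ht0 : 0 ≤ t) (ht1 : t ≤ 1)
    (xd : D) (xb : B) (xc : C) :
    s * t * max ‖(xd : G)‖ (max ‖(xb : G)‖ ‖(xc : G)‖) ≤ ‖(xd : G) + xb + xc‖ := by
  calc s * t * max ‖(xd : G)‖ (max ‖(xb : G)‖ ‖(xc : G)‖)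
      = max (s * (t * ‖(xd : G)‖)) (s * (t * max ‖(xb : G)‖ ‖(xc : G)‖)) := by
        rw [mul_max_of_nonneg _ _ (mul_nonneg hs ht0)]; ring_nf
    _ ≤ max (s * ‖(xd : G)‖) (s * ‖(xb : G) + xc‖) := by
        gcongr
        · exact mul_le_of_le_one_left (norm_nonneg _) ht1
        · exact hBC _ xb.2 _ xc.2
    _ = s * max ‖(xb : G) + xc‖ ‖(xd : G)‖ := by rw [max_comm, mul_max_of_nonneg _ _ hs]
    _ ≤ ‖(xb : G) + xc + xd‖ := hD _ (Submodule.add_mem_sup xb.2 xc.2) _ xd.2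
    _ = ‖(xd : G) + xb + xc‖ := by rw [add_comm ((xb : G) + xc), ← add_assoc]

variable [IsUltrametricDist G]

lemma of_mul_norm_le (ht0 : 0 ≤ t) (ht1 : t ≤ 1)
    (h : ∀ v ∈ V, ∀ w ∈ W, t * ‖w‖ ≤ ‖v + w‖) : IsROrthogonal t V W := by
  intro v hv w hw
  have hv' : t * ‖v‖ ≤ ‖v + w‖ :=
    calc t * ‖v‖ = t * ‖(v + w) + -w‖ := by rw [add_neg_cancel_right]
      _ ≤ t * max ‖v + w‖ ‖w‖ := by
          gcongr; simpa using IsUltrametricDist.norm_add_le_max (v + w) (-w)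
      _ = max (t * ‖v + w‖) (t * ‖w‖) := mul_max_of_nonneg _ _ ht0
      _ ≤ ‖v + w‖ := max_le (mul_le_of_le_one_left (norm_nonneg _) ht1) (h v hv w hw)
  rw [mul_max_of_nonneg _ _ ht0]
  exact max_le hv' (h v hv w hw)

lemma sup_right {L : Submodule K G} (hU : IsROrthogonal s W U) (hL : IsROrthogonal t (W ⊔ U) L)
    (hs0 : 0 ≤ s) (hs1 : s ≤ 1) (ht0 : 0 ≤ t) : IsROrthogonal (s * t) W (U ⊔ L) := by
  intro w hw y hy
  obtain ⟨u, hu, l, hl, rfl⟩ := Submodule.mem_sup.mp hy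
  calc s * t * max ‖w‖ ‖u + l‖
      ≤ s * t * max (max ‖w‖ ‖u‖) ‖l‖ := by
        rw [max_assoc]; gcongr; exact IsUltrametricDist.norm_add_le_max u l
    _ = max (t * (s * max ‖w‖ ‖u‖)) (s * (t * ‖l‖)) := by
        rw [mul_max_of_nonneg _ _ (mul_nonneg hs0 ht0)]; ring_nf
    _ ≤ max (t * ‖w + u‖) (t * ‖l‖) :=
        max_le_max (mul_le_mul_of_nonneg_left (hU w hw u hu) ht0)
          (mul_le_of_le_one_left (by positivity) hs1)
    _ = t * max ‖w + u‖ ‖l‖ := (mul_max_of_nonneg _ _ ht0).symm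
    _ ≤ ‖w + (u + l)‖ := by
        rw [← add_assoc]; exact hL _ (Submodule.add_mem_sup hw hu) l hl

end IsROrthogonal

variable [IsUltrametricDist G] {r : ℝ}

lemma exists_isROrthogonal_span_singleton (V : Submodule K G) (x : G) {t : ℝ}
    (ht0 : 0 < t) (ht1 : t < 1) :
    ∃ e : G, IsROrthogonal t V (K ∙ e) ∧ x ∈ closure ((V ⊔ K ∙ e : Submodule K G) : Set G) := by
  by_cases hx : x ∈ closure (V : Set G)
  · refine ⟨0, ?_, ?_⟩
    · rw [Submodule.span_zero_singleton]; exact IsROrthogonal.bot_right ht1.le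
    · rwa [Submodule.span_zero_singleton, sup_bot_eq]
  have hV : (V : Set G).Nonempty := ⟨0, V.zero_mem⟩
  have hδ : 0 < Metric.infDist x V := (Metric.infDist_pos_iff_notMem_closure hV).mp hx
  -- for `v ∈ V` with `t ‖x - v‖ < dist(x, V)`, the defect `x - v` is `t`-orthogonal to `V`
  obtain ⟨v, hv, hxv⟩ := (Metric.infDist_lt_iff hV).mp
    ((lt_div_iff₀ ht0).mpr (mul_lt_of_lt_one_right hδ ht1))
  rw [dist_eq_norm, lt_div_iff₀ ht0] at hxv
  refine ⟨x - v, IsROrthogonal.of_mul_norm_le ht0.le ht1.le fun z hz y hy => ?_, ?_⟩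
  · obtain ⟨b, rfl⟩ := Submodule.mem_span_singleton.mp hy
    rcases eq_or_ne b 0 with rfl | hb
    · simp
    have hdist : Metric.infDist x V ≤ ‖b⁻¹ • z + (x - v)‖ := by
      have := Metric.infDist_le_dist_of_mem (x := x) (V.sub_mem hv (V.smul_mem b⁻¹ hz))
      rwa [dist_eq_norm, sub_sub_eq_add_sub, add_comm x, add_sub_assoc] at this
    calc t * ‖b • (x - v)‖ = ‖b‖ * (‖x - v‖ * t) := by rw [norm_smul]; ring
      _ ≤ ‖b‖ * ‖b⁻¹ • z + (x - v)‖ := by gcongr; exact hxv.le.trans hdist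
      _ = ‖z + b • (x - v)‖ := by rw [← norm_smul, smul_add, smul_inv_smul₀ hb]
  · have hmem := Submodule.add_mem_sup hv (Submodule.mem_span_singleton_self (R := K) (x - v))
    rw [add_sub_cancel] at hmem
    exact subset_closure hmem

lemma exists_isROrthogonal_subset_closure_sup (W : Submodule K G) {s : Set G} (hs : s.Countable)
    (hr0 : 0 < r) (hr1 : r < 1) :
    ∃ U : Submodule K G, IsROrthogonal r W U ∧ s ⊆ closure ((W ⊔ U : Submodule K G) : Set G) := by
  obtain ⟨x, hsx⟩ := Set.countable_iff_exists_subset_range.mp hs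
  -- step `n` costs the factor `c (n + 1) / c n`; the `c n` decrease from `c 0 = 1` but exceed `r`
  set c : ℕ → ℝ := fun n => r + (1 - r) / 2 ^ n with hc
  have hc_gt n : r < c n := lt_add_of_pos_right r (div_pos (by linarith) (by positivity))
  have hc_succ n : c (n + 1) < c n := by
    have : 0 < (1 - r) / 2 ^ n := div_pos (by linarith) (by positivity)
    simp only [hc, pow_succ, ← div_div]
    linarith
  have hc_pos n : 0 < c n := hr0.trans (hc_gt n)
  have hc_le_one n : c n ≤ 1 := by
    have : (1 - r) / 2 ^ n ≤ 1 - r := div_le_self (by linarith) (one_le_pow₀ one_le_two)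
    simp only [hc]
    linarith
  choose e he using fun (V : Submodule K G) (n : ℕ) =>
    exists_isROrthogonal_span_singleton V (x n) (div_pos (hc_pos (n + 1)) (hc_pos n))
      ((div_lt_one (hc_pos n)).mpr (hc_succ n))
  let U : ℕ → Submodule K G := fun n => Nat.rec ⊥ (fun n U => U ⊔ K ∙ e (W ⊔ U) n) n
  have hU n : U (n + 1) = U n ⊔ K ∙ e (W ⊔ U n) n := rfl
  have hU_mono : Monotone U := monotone_nat_of_le_succ fun n => (hU n).symm ▸ le_sup_left
  have hU_orth n : IsROrthogonal (c n) W (U n) := by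
    induction n with
    | zero => exact IsROrthogonal.bot_right (hc_le_one 0)
    | succ n ih =>
      have := ih.sup_right (he _ n).1 (hc_pos n).le (hc_le_one n)
        (div_pos (hc_pos (n + 1)) (hc_pos n)).le
      rwa [mul_div_cancel₀ _ (hc_pos n).ne'] at this
  refine ⟨⨆ n, U n, fun w hw u hu => ?_, ?_⟩
  · obtain ⟨n, hn⟩ := (Submodule.mem_iSup_of_directed U hU_mono.directed_le).mp hu
    exact (hU_orth n).mono (hc_gt n).le w hw u hn
  · intro p hp
    obtain ⟨n, rfl⟩ := hsx hp
    refine closure_mono ?_ (he (W ⊔ U n) n).2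
    rw [sup_assoc, ← hU]
    exact sup_le_sup_left (le_iSup U (n + 1)) W

theorem exists_isROrthogonal_isCompl [CompleteSpace G]
    (hgen : ∃ s : Set G, s.Countable ∧ Dense ((Submodule.span K s : Submodule K G) : Set G))
    {W : Submodule K G} (hW : IsClosed (W : Set G)) (hr0 : 0 < r) (hr1 : r < 1) :
    ∃ W' : Submodule K G, IsClosed (W' : Set G) ∧ IsROrthogonal r W W' ∧ IsCompl W W' := by
  obtain ⟨s, hs, hdense⟩ := hgen
  obtain ⟨U, hU, hsU⟩ := exists_isROrthogonal_subset_closure_sup W hs hr0 hr1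
  have hU' := hU.topologicalClosure_right
  have hclosed := hU'.isClosed_sup hr0 hW U.isClosed_topologicalClosure
  refine ⟨U.topologicalClosure, U.isClosed_topologicalClosure, hU', hU'.disjoint hr0,
    codisjoint_iff.mpr (eq_top_iff.mpr ?_)⟩
  have hspan : Submodule.span K s ≤ W ⊔ U.topologicalClosure := by
    refine Submodule.span_le.mpr (hsU.trans ?_)
    refine closure_minimal (SetLike.coe_subset_coe.mpr ?_) hclosed
    exact sup_le_sup_left U.le_topologicalClosure W
  rw [← Submodule.dense_iff_topologicalClosure_eq_top.mp hdense]
  exact Submodule.topologicalClosure_minimal _ hspan hclosed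

end ROrthogonal

lemma exists_preimage_norm_lt_of_boundaryDepth_le {C : Type*} [NormedAddCommGroup C]
    {d : C → C} {β c : ℝ} (hβ0 : 0 ≤ β) (hβ : boundaryDepth d ≤ ENNReal.ofReal β)
    {x : C} (hx0 : x ≠ 0) (hx : x ∈ Set.range d) (hc : Real.exp β < c) :
    ∃ y, d y = x ∧ ‖y‖ < c * ‖x‖ := by
  have hd : ¬ ∀ z, d z = 0 := by
    obtain ⟨z, rfl⟩ := hx
    exact fun h => hx0 (h z)
  rw [boundaryDepth, if_neg hd] at hβ
  have hc0 : 0 < c := (Real.exp_pos β).trans hc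
  have hlog : β < Real.log c := (Real.lt_log_iff_exp_lt hc0).mpr hc
  have hinf : ⨅ y ∈ {y | d y = x}, ENNReal.ofReal (Real.log ‖y‖ - Real.log ‖x‖) <
      ENNReal.ofReal (Real.log c) :=
    (le_iSup₂ (f := fun x (_ : x ∈ {x : C | x ≠ 0 ∧ ∃ y, d y = x}) =>
      ⨅ y ∈ {y | d y = x}, ENNReal.ofReal (Real.log ‖y‖ - Real.log ‖x‖)) x ⟨hx0, hx⟩).trans_lt
      (hβ.trans_lt ((ENNReal.ofReal_lt_ofReal_iff (hβ0.trans_lt hlog)).mpr hlog))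
  obtain ⟨y, hy⟩ := iInf_lt_iff.mp hinf
  obtain ⟨hyx, hlt⟩ := iInf_lt_iff.mp hy
  refine ⟨y, hyx, ?_⟩
  have hx' : 0 < ‖x‖ := norm_pos_iff.mpr hx0
  rcases (norm_nonneg y).eq_or_lt with hy0 | hy0
  · rw [← hy0]
    positivity
  · rw [← Real.log_lt_log_iff hy0 (by positivity), Real.log_mul hc0.ne' hx'.ne']
    linarith [(ENNReal.ofReal_lt_ofReal_iff (hβ0.trans_lt hlog)).mp hlt]

lemma mul_norm_le_exp_mul_norm_of_isROrthogonal_ker {K G : Type*} [NormedField K]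
    [NormedAddCommGroup G] [NormedSpace K G] {d : G →ₗ[K] G} {β ρ : ℝ} (hβ0 : 0 ≤ β)
    (hβ : boundaryDepth d ≤ ENNReal.ofReal β) {D : Submodule K G}
    (hD : IsROrthogonal ρ (LinearMap.ker d) D) (hρ : 0 < ρ) {p : G} (hp : p ∈ D) :
    ρ * ‖p‖ ≤ Real.exp β * ‖d p‖ := by
  rcases eq_or_ne (d p) 0 with hdp | hdp
  · rw [Submodule.disjoint_def.mp (hD.disjoint hρ) p hdp hp]
    simp
  have hdp' : 0 < ‖d p‖ := norm_pos_iff.mpr hdp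
  rw [← div_le_iff₀ hdp']
  refine le_of_forall_gt_imp_ge_of_dense fun c hc => ?_
  obtain ⟨y, hy, hlt⟩ := exists_preimage_norm_lt_of_boundaryDepth_le hβ0 hβ hdp ⟨p, rfl⟩ hc
  have hker : y - p ∈ LinearMap.ker d := by simp [hy]
  rw [div_le_iff₀ hdp']
  calc ρ * ‖p‖ ≤ ρ * max ‖y - p‖ ‖p‖ := by gcongr; exact le_max_right _ _
    _ ≤ ‖y - p + p‖ := hD _ hker p hp
    _ ≤ c * ‖d p‖ := by rw [sub_add_cancel]; exact hlt.le

lemma existsUnique_add_add_of_mul_max_le {K G : Type*} [NormedField K] [NormedAddCommGroup G]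
    [NormedSpace K G] {r : ℝ} {D B C : Submodule K G} (hr : 0 < r) (htop : D ⊔ (B ⊔ C) = ⊤)
    (h : ∀ (xd : D) (xb : B) (xc : C),
      r * max ‖(xd : G)‖ (max ‖(xb : G)‖ ‖(xc : G)‖) ≤ ‖(xd : G) + xb + xc‖)
    (x : G) : ∃! t : D × B × C, x = (t.1 : G) + (t.2.1 : G) + (t.2.2 : G) := by
  obtain ⟨xd, hxd, y, hy, rfl⟩ := Submodule.mem_sup.mp (htop ▸ Submodule.mem_top (x := x))
  obtain ⟨xb, hxb, xc, hxc, rfl⟩ := Submodule.mem_sup.mp hy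
  set t₀ : D × B × C := (⟨xd, hxd⟩, ⟨xb, hxb⟩, ⟨xc, hxc⟩)
  refine ⟨t₀, (add_assoc _ _ _).symm, fun t ht => sub_eq_zero.mp ?_⟩
  set u := t - t₀
  have hu : (u.1 : G) + u.2.1 + u.2.2 = 0 := by
    simp only [u, t₀, Prod.fst_sub, Prod.snd_sub, Submodule.coe_sub]
    rw [show (t.1 : G) - xd + ((t.2.1 : G) - xb) + ((t.2.2 : G) - xc) =
      ((t.1 : G) + t.2.1 + t.2.2) - (xd + (xb + xc)) by abel, ← ht, sub_self]
  have hmax := nonpos_of_mul_nonpos_right ((h u.1 u.2.1 u.2.2).trans_eq (by rw [hu, norm_zero])) hr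
  have h1 : ‖(u.1 : G)‖ ≤ 0 := (le_max_left _ _).trans hmax
  have h2 : ‖(u.2.1 : G)‖ ≤ 0 := ((le_max_left _ _).trans (le_max_right _ _)).trans hmax
  have h3 : ‖(u.2.2 : G)‖ ≤ 0 := ((le_max_right _ _).trans (le_max_right _ _)).trans hmax
  exact Prod.ext (by simpa using h1) (Prod.ext (by simpa using h2) (by simpa using h3))

theorem exists_rOrthogonal_decomposition_general
    {K : Type*} [NormedField K]
    {G : Type*} [NormedAddCommGroup G] [NormedSpace K G] [CompleteSpace G]
    [IsUltrametricDist G]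
    (hgen : ∃ s : Set G, s.Countable ∧ Dense ((Submodule.span K s : Submodule K G) : Set G))
    (d : G →L[K] G) (hd2 : ∀ x, d (d x) = 0)
    (β : ℝ) (hβ0 : 0 ≤ β) (hβ : boundaryDepth (fun x => d x) = ENNReal.ofReal β) :
    ∀ r : ℝ, 0 < r → r < 1 →
      ∃ D B C : Submodule K G,
        IsClosed (D : Set G) ∧ IsClosed (B : Set G) ∧ IsClosed (C : Set G) ∧
        (∀ x : G, ∃! t : ↥D × ↥B × ↥C, x = (t.1 : G) + (t.2.1 : G) + (t.2.2 : G)) ∧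
        (∀ (xd : ↥D) (xb : ↥B) (xc : ↥C),
          r * max ‖(xd : G)‖ (max ‖(xb : G)‖ ‖(xc : G)‖) ≤
            ‖(xd : G) + (xb : G) + (xc : G)‖) ∧
        LinearMap.ker (d : G →ₗ[K] G) = B ⊔ C ∧
        LinearMap.range (d : G →ₗ[K] G) = B ∧
        (B : Set G) = ⇑d '' (D : Set G) ∧
        (∀ x ∈ D, ∀ y ∈ D, d x = d y → x = y) ∧
        (∀ x ∈ D, ‖x‖ ≤ (1 / r) * Real.exp β * ‖d x‖) := by
  intro r hr0 hr1
  set ρ := √r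
  have hρ0 : 0 < ρ := Real.sqrt_pos.mpr hr0
  have hρ1 : ρ < 1 := by simpa using Real.sqrt_lt_sqrt hr0.le hr1
  have hρρ : ρ * ρ = r := Real.mul_self_sqrt hr0.le
  obtain ⟨D, hDc, hkerD, hcompl⟩ := exists_isROrthogonal_isCompl hgen d.isClosed_ker hρ0 hρ1
  have hbound p (hp : p ∈ D) : ρ * ‖p‖ ≤ Real.exp β * ‖d p‖ :=
    mul_norm_le_exp_mul_norm_of_isROrthogonal_ker (d := (d : G →ₗ[K] G)) hβ0 hβ.le hkerD hρ0 hp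
  have hBD : (LinearMap.range (d : G →ₗ[K] G) : Set G) = d '' D := by
    rw [LinearMap.range_eq_map_of_isCompl_ker _ hcompl, Submodule.map_coe]
    rfl
  set B := LinearMap.range (d : G →ₗ[K] G)
  have hBc : IsClosed (B : Set G) := hBD ▸ d.isClosed_image_of_norm_le hDc (ρ⁻¹ * Real.exp β)
    fun p hp => by rw [mul_assoc, inv_mul_eq_div, le_div_iff₀' hρ0]; exact hbound p hp
  obtain ⟨E, hEc, hBE, hBEcompl⟩ := exists_isROrthogonal_isCompl hgen hBc hρ0 hρ1
  have hker : LinearMap.ker (d : G →ₗ[K] G) = B ⊔ E ⊓ LinearMap.ker (d : G →ₗ[K] G) := by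
    rw [← sup_inf_assoc_of_le _ (LinearMap.range_le_ker_iff.mpr (LinearMap.ext hd2)),
      hBEcompl.sup_eq_top, top_inf_eq]
  have horth := (hker ▸ hkerD).mul_max_le_norm_add_add (hBE.mono_right inf_le_left)
    hρ0.le hρ0.le hρ1.le
  rw [hρρ] at horth
  refine ⟨D, B, E ⊓ LinearMap.ker (d : G →ₗ[K] G), hDc, hBc, hEc.inter d.isClosed_ker,
    existsUnique_add_add_of_mul_max_le hr0 (by rw [← hker, hcompl.symm.sup_eq_top]) horth,
    horth, hker, rfl, hBD,
    fun x hx y hy => LinearMap.injOn_of_disjoint_ker subset_rfl hcompl.symm.disjoint hx hy,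
    fun x hx => ?_⟩
  rw [mul_assoc, one_div_mul_eq_div, le_div_iff₀' hr0]
  calc r * ‖x‖ ≤ ρ * ‖x‖ := by
        gcongr; rw [← hρρ]; exact mul_le_of_le_one_left hρ0.le hρ1.le
    _ ≤ Real.exp β * ‖d x‖ := hbound x hx

/-- Let `(G,d)` be a countably generated nonarchimedean normed chain
complex over `K` with finite boundary depth `β`. Then for every `r ∈ (0,1)` there is an
`r`-orthogonal decomposition `G = D ⊕ B ⊕ C` into closed subspaces with
`ker d = B ⊕ C`, `B = d(D) = range d`, `d` injective on `D`, and the induced inverse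
`d⁻¹ : B → D` bounded by `(1/r)·e^β`. -/
theorem exists_rOrthogonal_decomposition
    {K : Type*} [NormedField K] [IsUltrametricDist K] [CompleteSpace K]
    {G : Type*} [NormedAddCommGroup G] [NormedSpace K G] [CompleteSpace G]
    [IsUltrametricDist G]
    (hgen : ∃ s : Set G, s.Countable ∧ Dense ((Submodule.span K s : Submodule K G) : Set G))
    (d : G →L[K] G) (hd2 : ∀ x, d (d x) = 0) (hd1 : ∀ x, ‖d x‖ ≤ ‖x‖)
    (β : ℝ) (hβ0 : 0 ≤ β) (hβ : boundaryDepth (fun x => d x) = ENNReal.ofReal β) :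
    ∀ r : ℝ, 0 < r → r < 1 →
      ∃ D B C : Submodule K G,
        IsClosed (D : Set G) ∧ IsClosed (B : Set G) ∧ IsClosed (C : Set G) ∧
        (∀ x : G, ∃! t : ↥D × ↥B × ↥C, x = (t.1 : G) + (t.2.1 : G) + (t.2.2 : G)) ∧
        (∀ (xd : ↥D) (xb : ↥B) (xc : ↥C),
          r * max ‖(xd : G)‖ (max ‖(xb : G)‖ ‖(xc : G)‖) ≤
            ‖(xd : G) + (xb : G) + (xc : G)‖) ∧
        LinearMap.ker (d : G →ₗ[K] G) = B ⊔ C ∧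
        LinearMap.range (d : G →ₗ[K] G) = B ∧
        (B : Set G) = ⇑d '' (D : Set G) ∧
        (∀ x ∈ D, ∀ y ∈ D, d x = d y → x = y) ∧
        (∀ x ∈ D, ‖x‖ ≤ (1 / r) * Real.exp β * ‖d x‖) :=
  exists_rOrthogonal_decomposition_general hgen d hd2 β hβ0 hβ
end

section
/- Let V₀, V₁, W₀, W₁ be nonarchimedean Banach spaces over K. Let f : V₀ → W₀ and g : V₁ → W₁ be K-linear isometries, and let h₀ : V₀ → V₁ and h₁ : W₀ → W₁ be continuous K-linear maps such that h₀ is injective and has dense image. Suppose the square is almost commutative in the pointwise sense: ‖(g∘h₀)(v) − (h₁∘f)(v)‖ < ‖h₀(v)‖ for every nonzero v ∈ V₀. Then there exists a unique continuous K-linear map g̃ : V₁ → W₁ with g̃∘h₀ = h₁∘f; moreover g̃ is an isometry, and ‖g̃(h₀(v)) − g(h₀(v))‖ < ‖h₀(v)‖ for every nonzero v ∈ V₀. -/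
lemma ultra_norm_eq_of_sub_lt {W : Type*} [NormedAddCommGroup W] [IsUltrametricDist W]
    {a b : W} (h : ‖a - b‖ < ‖a‖) : ‖b‖ = ‖a‖ := by
  have hb : ‖b‖ ≤ ‖a‖ := by
    have hba : b = a + -(a - b) := by abel
    calc ‖b‖ = ‖a + -(a - b)‖ := by rw [← hba]
      _ ≤ max ‖a‖ ‖-(a - b)‖ := IsUltrametricDist.norm_add_le_max _ _
      _ ≤ ‖a‖ := by rw [norm_neg]; exact max_le le_rfl h.le
  refine le_antisymm hb (le_of_not_gt fun hc => ?_)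
  have hle : ‖a‖ ≤ max ‖a - b‖ ‖b‖ := by
    calc ‖a‖ = ‖(a - b) + b‖ := by rw [sub_add_cancel]
      _ ≤ _ := IsUltrametricDist.norm_add_le_max _ _
  exact absurd hle (not_le.mpr (max_lt h hc))

set_option maxHeartbeats 1000000 in
/-- rigidity of almost commutative squares. Given `K`-linear isometries
`f : V₀ → W₀`, `g : V₁ → W₁` between nonarchimedean Banach spaces over `K`, and continuous
`K`-linear maps `h₀ : V₀ → V₁` (injective with dense image) and `h₁ : W₀ → W₁` such that
`‖g(h₀ v) − h₁(f v)‖ < ‖h₀ v‖` for every nonzero `v`, there is a unique continuous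
`K`-linear `g̃ : V₁ → W₁` with `g̃ ∘ h₀ = h₁ ∘ f`; moreover `g̃` is an isometry and
`‖g̃(h₀ v) − g(h₀ v)‖ < ‖h₀ v‖` for every nonzero `v`. -/
theorem exists_unique_strictly_commuting_correction
    {K : Type*} [NormedField K] [IsUltrametricDist K] [CompleteSpace K]
    {V₀ : Type*} [NormedAddCommGroup V₀] [NormedSpace K V₀] [CompleteSpace V₀]
    [IsUltrametricDist V₀]
    {V₁ : Type*} [NormedAddCommGroup V₁] [NormedSpace K V₁] [CompleteSpace V₁]
    [IsUltrametricDist V₁]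
    {W₀ : Type*} [NormedAddCommGroup W₀] [NormedSpace K W₀] [CompleteSpace W₀]
    [IsUltrametricDist W₀]
    {W₁ : Type*} [NormedAddCommGroup W₁] [NormedSpace K W₁] [CompleteSpace W₁]
    [IsUltrametricDist W₁]
    (f : V₀ →ₗ[K] W₀) (hf : ∀ v, ‖f v‖ = ‖v‖)
    (g : V₁ →ₗ[K] W₁) (hg : ∀ v, ‖g v‖ = ‖v‖)
    (h₀ : V₀ →L[K] V₁) (h₁ : W₀ →L[K] W₁)
    (h₀inj : Function.Injective ⇑h₀) (h₀dense : DenseRange ⇑h₀)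
    (halmost : ∀ v : V₀, v ≠ 0 → ‖g (h₀ v) - h₁ (f v)‖ < ‖h₀ v‖) :
    (∃! gt : V₁ →L[K] W₁, ∀ v : V₀, gt (h₀ v) = h₁ (f v)) ∧
    ∀ gt : V₁ →L[K] W₁, (∀ v : V₀, gt (h₀ v) = h₁ (f v)) →
      (∀ x : V₁, ‖gt x‖ = ‖x‖) ∧
      ∀ v : V₀, v ≠ 0 → ‖gt (h₀ v) - g (h₀ v)‖ < ‖h₀ v‖ := by
  -- key norm identity
  have key : ∀ v : V₀, ‖h₁ (f v)‖ = ‖h₀ v‖ := by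
    intro v
    rcases eq_or_ne v 0 with rfl | hv
    · simp
    · have h1 := halmost v hv
      rw [← hg (h₀ v)] at h1
      rw [ultra_norm_eq_of_sub_lt h1, hg]
  -- uniqueness of a commuting extension
  have uniq : ∀ gt gt' : V₁ →L[K] W₁, (∀ v, gt (h₀ v) = h₁ (f v)) →
      (∀ v, gt' (h₀ v) = h₁ (f v)) → gt = gt' := by
    intro gt gt' hgt hgt'
    have hcoe : ⇑gt = ⇑gt' := by
      refine Continuous.ext_on h₀dense gt.continuous gt'.continuous ?_
      rintro _ ⟨v, rfl⟩
      rw [hgt v, hgt' v]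
    exact ContinuousLinearMap.ext fun x => congrFun hcoe x
  -- construction of the extension
  set S : Submodule K V₁ := LinearMap.range (h₀ : V₀ →ₗ[K] V₁) with hS
  have h₀inj' : Function.Injective (h₀ : V₀ →ₗ[K] V₁) := h₀inj
  set e : V₀ ≃ₗ[K] S := LinearEquiv.ofInjective (h₀ : V₀ →ₗ[K] V₁) h₀inj' with he
  have he_coe : ∀ v : V₀, ((e v : S) : V₁) = h₀ v := fun v => rfl
  set ψ : V₀ →ₗ[K] W₁ := (h₁ : W₀ →ₗ[K] W₁) ∘ₗ f with hψ
  set χ : S →ₗ[K] W₁ := ψ ∘ₗ (e.symm : S →ₗ[K] V₀) with hχ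
  have hχnorm : ∀ s : S, ‖χ s‖ = ‖s‖ := by
    intro s
    have hs : ((e (e.symm s) : S) : V₁) = (s : V₁) := by rw [e.apply_symm_apply]
    have : (s : V₁) = h₀ (e.symm s) := by rw [← hs, he_coe]
    calc ‖χ s‖ = ‖h₁ (f (e.symm s))‖ := rfl
      _ = ‖h₀ (e.symm s)‖ := key _
      _ = ‖(s : V₁)‖ := by rw [← this]
      _ = ‖s‖ := rfl
  let χiso : S →ₗᵢ[K] W₁ := ⟨χ, hχnorm⟩
  have hSdense : Dense (S : Set V₁) := by
    refine Dense.mono ?_ h₀dense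
    rintro _ ⟨v, rfl⟩
    exact ⟨v, rfl⟩
  have hSd : DenseRange ((↑) : S → V₁) := by
    simpa [DenseRange, Subtype.range_coe] using hSdense
  have hSui : IsUniformInducing ((↑) : S → V₁) := isometry_subtype_coe.isUniformInducing
  set G : V₁ → W₁ := (hSui.isDenseInducing hSd).extend ⇑χiso with hG
  have hGcont : Continuous G :=
    (uniformContinuous_uniformly_extend hSui hSd χiso.isometry.uniformContinuous).continuous
  have hGeq : ∀ s : S, G s = χ s := fun s =>
    (hSui.isDenseInducing hSd).extend_eq χiso.continuous s
  have hGadd : ∀ x y : V₁, G (x + y) = G x + G y := by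
    have hD2 : Dense ((S : Set V₁) ×ˢ (S : Set V₁)) := hSdense.prod hSdense
    have heq : (fun p : V₁ × V₁ => G (p.1 + p.2)) =
        fun p : V₁ × V₁ => G p.1 + G p.2 := by
      refine Continuous.ext_on hD2 (hGcont.comp (continuous_fst.add continuous_snd))
        ((hGcont.comp continuous_fst).add (hGcont.comp continuous_snd)) ?_
      rintro ⟨x, y⟩ ⟨hx, hy⟩
      have hsum : x + y = ((⟨x, hx⟩ + ⟨y, hy⟩ : S) : V₁) := rfl
      show G (x + y) = G x + G y
      rw [hsum, hGeq, map_add]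
      have hx' : G x = χ ⟨x, hx⟩ := hGeq ⟨x, hx⟩
      have hy' : G y = χ ⟨y, hy⟩ := hGeq ⟨y, hy⟩
      rw [hx', hy']
    intro x y
    exact congrFun heq (x, y)
  have hGsmul : ∀ (c : K) (x : V₁), G (c • x) = c • G x := by
    intro c
    have heq : (fun x : V₁ => G (c • x)) = fun x : V₁ => c • G x := by
      refine Continuous.ext_on hSdense (hGcont.comp (continuous_const_smul c))
        ((continuous_const_smul c).comp hGcont) ?_
      intro x hx
      have hsm : c • x = ((c • (⟨x, hx⟩ : S) : S) : V₁) := rfl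
      show G (c • x) = c • G x
      rw [hsm, hGeq, map_smul, hGeq ⟨x, hx⟩]
    intro x
    exact congrFun heq x
  let Glin : V₁ →ₗ[K] W₁ :=
    { toFun := G, map_add' := hGadd, map_smul' := fun c x => hGsmul c x }
  let gt₀ : V₁ →L[K] W₁ := { toLinearMap := Glin, cont := hGcont }
  have hgt₀ : ∀ v : V₀, gt₀ (h₀ v) = h₁ (f v) := by
    intro v
    show G (h₀ v) = h₁ (f v)
    have : h₀ v = ((e v : S) : V₁) := rfl
    rw [this, hGeq (e v)]
    show ψ (e.symm (e v)) = h₁ (f v)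
    rw [e.symm_apply_apply]
    rfl
  constructor
  · exact ⟨gt₀, hgt₀, fun gt' hgt' => uniq gt' gt₀ hgt' hgt₀⟩
  · intro gt hgt
    constructor
    · have : (fun x => ‖gt x‖) = fun x => ‖x‖ := by
        refine Continuous.ext_on h₀dense (continuous_norm.comp gt.continuous)
          continuous_norm ?_
        rintro _ ⟨v, rfl⟩
        simp only [Function.comp_apply]
        rw [hgt v, key v]
      exact fun x => congrFun this x
    · intro v hv
      rw [hgt v, norm_sub_rev]
      exact halmost v hv
end

section
/- Let J be a small category with an initial object 0. Suppose given, for every object j of J, nonarchimedean Banach spaces V_j and W_j over K and a K-linear isometry f_j : V_j → W_j, and, for every morphism φ : i → j of J, continuous K-linear maps h_φ : V_i → V_j and k_φ : W_i → W_j depending functorially on φ (identity morphisms go to identity maps, h_{ψ∘φ} = h_ψ∘h_φ and k_{ψ∘φ} = k_ψ∘k_φ), with every h_φ injective and of dense image. Assume every square is almost commutative in the pointwise sense: for every morphism φ : i → j and every nonzero v ∈ V_i, ‖(f_j∘h_φ)(v) − (k_φ∘f_i)(v)‖ < ‖h_φ(v)‖. Then there exists a unique family of continuous K-linear maps f̃_j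 : V_j → W_j (one for each object j of J) such that f̃_0 = f_0 and f̃_j∘h_φ = k_φ∘f̃_i for every morphism φ : i → j; moreover every f̃_j is an isometry and, writing h_{0j} for the map associated to the unique morphism 0 → j, one has ‖f̃_j(h_{0j}(v)) − f_j(h_{0j}(v))‖ < ‖h_{0j}(v)‖ for every nonzero v ∈ V_0. -/
open CategoryTheory

theorem my_extend_aux {K : Type*} [NormedField K] {E F G : Type*}
    [NormedAddCommGroup E] [NormedSpace K E]
    [NormedAddCommGroup F] [NormedSpace K F] [CompleteSpace F]
    [NormedAddCommGroup G] [NormedSpace K G]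
    (f : E →L[K] F) (hfu : UniformContinuous f)
    (e : E →L[K] G) (h_dense : DenseRange ⇑e) (h_e : IsUniformInducing ⇑e) :
    ∃ g : G →L[K] F, ∀ x, g (e x) = f x := by
  have cont := (uniformContinuous_uniformly_extend h_e h_dense hfu).continuous
  have heq := uniformly_extend_of_ind h_e h_dense hfu
  refine ⟨{ toFun := (h_e.isDenseInducing h_dense).extend f
            map_add' := ?_
            map_smul' := ?_
            cont := cont }, fun x => heq x⟩
  · intro x y
    refine h_dense.induction_on₂ ?_ ?_ x y
    · exact isClosed_eq (cont.comp continuous_add)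
        ((cont.comp continuous_fst).add (cont.comp continuous_snd))
    · intro a b
      simp only [← e.map_add, heq, f.map_add]
  · intro c x
    refine h_dense.induction_on x ?_ ?_
    · exact isClosed_eq (cont.comp (continuous_const_smul _))
        ((continuous_const_smul _).comp cont)
    · intro a
      rw [← map_smul]
      simp only [heq]
      exact f.map_smul _ _

set_option maxHeartbeats 2000000 in
/-- promoting an almost natural transformation to a natural one.
Let `J` be a small category with an initial object `z`. Given families of
nonarchimedean Banach spaces `V j`, `W j` over `K`, `K`-linear isometries
`f j : V j → W j`, and functorial families of continuous `K`-linear maps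
`h φ : V i → V j`, `k φ : W i → W j` for morphisms `φ : i ⟶ j`, with each `h φ`
injective of dense image, such that every square is almost commutative
(`‖f j (h φ v) − k φ (f i v)‖ < ‖h φ v‖` for nonzero `v`), there is a unique family
`F j : V j → W j` of continuous `K`-linear maps with `F z = f z` which is natural
(`F j ∘ h φ = k φ ∘ F i`); moreover each `F j` is an isometry and, with `h₀ⱼ` the map
associated to the unique morphism `z ⟶ j`,
`‖F j (h₀ⱼ v) − f j (h₀ⱼ v)‖ < ‖h₀ⱼ v‖` for nonzero `v`. -/
theorem exists_unique_natural_correction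
    {K : Type*} [NormedField K] [IsUltrametricDist K] [CompleteSpace K]
    {J : Type*} [SmallCategory J] (z : J) (hz : Limits.IsInitial z)
    (V W : J → Type*)
    [∀ j, NormedAddCommGroup (V j)] [∀ j, NormedSpace K (V j)]
    [∀ j, CompleteSpace (V j)] [∀ j, IsUltrametricDist (V j)]
    [∀ j, NormedAddCommGroup (W j)] [∀ j, NormedSpace K (W j)]
    [∀ j, CompleteSpace (W j)] [∀ j, IsUltrametricDist (W j)]
    (f : ∀ j, V j →ₗ[K] W j) (hf : ∀ (j) (v : V j), ‖f j v‖ = ‖v‖)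
    (h : ∀ {i j : J}, (i ⟶ j) → (V i →L[K] V j))
    (k : ∀ {i j : J}, (i ⟶ j) → (W i →L[K] W j))
    (hid : ∀ i : J, h (𝟙 i) = ContinuousLinearMap.id K (V i))
    (kid : ∀ i : J, k (𝟙 i) = ContinuousLinearMap.id K (W i))
    (hcomp : ∀ {i j l : J} (φ : i ⟶ j) (ψ : j ⟶ l), h (φ ≫ ψ) = (h ψ).comp (h φ))
    (kcomp : ∀ {i j l : J} (φ : i ⟶ j) (ψ : j ⟶ l), k (φ ≫ ψ) = (k ψ).comp (k φ))
    (hinj : ∀ {i j : J} (φ : i ⟶ j), Function.Injective ⇑(h φ))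
    (hdense : ∀ {i j : J} (φ : i ⟶ j), DenseRange ⇑(h φ))
    (halmost : ∀ {i j : J} (φ : i ⟶ j) (v : V i), v ≠ 0 →
      ‖f j (h φ v) - k φ (f i v)‖ < ‖h φ v‖) :
    (∃! F : ∀ j, V j →L[K] W j,
      (∀ v : V z, F z v = f z v) ∧
      ∀ (i j : J) (φ : i ⟶ j) (v : V i), F j (h φ v) = k φ (F i v)) ∧
    ∀ F : ∀ j, V j →L[K] W j,
      ((∀ v : V z, F z v = f z v) ∧
        ∀ (i j : J) (φ : i ⟶ j) (v : V i), F j (h φ v) = k φ (F i v)) →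
      (∀ (j : J) (x : V j), ‖F j x‖ = ‖x‖) ∧
      ∀ (j : J) (v : V z), v ≠ 0 →
        ‖F j (h (hz.to j) v) - f j (h (hz.to j) v)‖ < ‖h (hz.to j) v‖ := by
  classical
  -- `f z` as a continuous linear map
  have fz_bound : ∀ v : V z, ‖f z v‖ ≤ 1 * ‖v‖ := by
    intro v; rw [hf, one_mul]
  let fz : V z →L[K] W z := (f z).mkContinuous 1 fz_bound
  have fz_apply : ∀ v, fz v = f z v := fun _ => rfl
  -- key norm identity: `k φ (f i v)` has the same norm as `h φ v`
  have key : ∀ {i j : J} (φ : i ⟶ j) (v : V i), ‖k φ (f i v)‖ = ‖h φ v‖ := by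
    intro i j φ v
    by_cases hv : v = 0
    · simp [hv]
    · have h1 : ‖f j (h φ v)‖ = ‖h φ v‖ := hf _ _
      have h2 := halmost φ v hv
      rw [← h1] at h2
      set a := f j (h φ v) with ha
      set b := k φ (f i v) with hb
      have hb_le : ‖b‖ ≤ ‖a‖ := by
        have hba : b = a + -(a - b) := by abel
        calc ‖b‖ = ‖a + -(a - b)‖ := by rw [← hba]
          _ ≤ max ‖a‖ ‖-(a - b)‖ := IsUltrametricDist.norm_add_le_max _ _
          _ = max ‖a‖ ‖a - b‖ := by rw [norm_neg]
          _ ≤ ‖a‖ := max_le le_rfl h2.le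
      have hba : ‖b‖ = ‖a‖ := by
        by_contra hne
        have hlt : ‖b‖ < ‖a‖ := lt_of_le_of_ne hb_le hne
        have ha_le : ‖a‖ ≤ max ‖b‖ ‖a - b‖ := by
          have hab : a = b + (a - b) := by abel
          calc ‖a‖ = ‖b + (a - b)‖ := by rw [← hab]
            _ ≤ max ‖b‖ ‖a - b‖ := IsUltrametricDist.norm_add_le_max _ _
        exact absurd (ha_le.trans_lt (max_lt hlt h2)) (lt_irrefl _)
      rw [hba, h1]
  -- construct the family `F` by density
  have exF : ∀ j : J, ∃ Fj : V j →L[K] W j,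
      ∀ v : V z, Fj (h (hz.to j) v) = k (hz.to j) (f z v) := by
    intro j
    set e : V z →L[K] V j := h (hz.to j) with he
    let g : V z →L[K] W j := (k (hz.to j)).comp fz
    have g_apply : ∀ v, g v = k (hz.to j) (f z v) := fun _ => rfl
    have gnorm : ∀ v, ‖g v‖ = ‖e v‖ := fun v => key (hz.to j) v
    set M : Submodule K (V j) := LinearMap.range (e : V z →ₗ[K] V j) with hM
    have hmem : ∀ v : V z, e v ∈ M := fun v => ⟨v, rfl⟩
    let eq : V z ≃ₗ[K] M := LinearEquiv.ofInjective (e : V z →ₗ[K] V j) (hinj (hz.to j))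
    have eq_apply : ∀ v : V z, ((eq v : M) : V j) = e v := fun _ => rfl
    let T : M →ₗ[K] W j := (g : V z →ₗ[K] W j).comp (eq.symm : M →ₗ[K] V z)
    have Tnorm : ∀ x : M, ‖T x‖ = ‖x‖ := by
      intro x
      obtain ⟨v, rfl⟩ := eq.surjective x
      show ‖g (eq.symm (eq v))‖ = ‖eq v‖
      rw [eq.symm_apply_apply, gnorm, ← Submodule.norm_coe (eq v), eq_apply]
    have Tbound : ∀ x : M, ‖T x‖ ≤ 1 * ‖x‖ := by
      intro x; rw [Tnorm, one_mul]
    let Tc : M →L[K] W j := T.mkContinuous 1 Tbound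
    have Tc_apply : ∀ x : M, Tc x = T x := fun _ => rfl
    have hsub_dense : DenseRange ⇑(M.subtypeL) := by
      have hsub : Set.range ⇑(M.subtypeL) = (M : Set (V j)) := by
        rw [Submodule.coe_subtypeL']; exact Subtype.range_coe
      have hd : Dense (Set.range ⇑e) := hdense (hz.to j)
      have hMd : Dense (M : Set (V j)) := by
        refine hd.mono ?_
        rintro x ⟨v, rfl⟩; exact hmem v
      rw [DenseRange, hsub]; exact hMd
    have hsub_ui : IsUniformInducing ⇑(M.subtypeL) :=
      isometry_subtype_coe.isUniformInducing
    have hTcU : UniformContinuous ⇑Tc :=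
      (AddMonoidHomClass.lipschitz_of_bound Tc 1
        (fun x => by rw [Tc_apply, Tnorm]; simp)).uniformContinuous
    obtain ⟨G, hG⟩ := my_extend_aux Tc hTcU M.subtypeL hsub_dense hsub_ui
    refine ⟨G, fun v => ?_⟩
    have h1 : h (hz.to j) v = M.subtypeL ⟨e v, hmem v⟩ := rfl
    rw [h1, hG]
    have h2 : (⟨e v, hmem v⟩ : M) = eq v := by
      apply Subtype.ext; exact (eq_apply v).symm
    rw [h2, Tc_apply]
    show g (eq.symm (eq v)) = _
    rw [eq.symm_apply_apply, g_apply]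
  choose F hF using exF
  -- `F z = f z`
  have hFz : ∀ v : V z, F z v = f z v := by
    intro v
    have h0 : hz.to z = 𝟙 z := hz.hom_ext _ _
    have := hF z v
    rw [h0, hid, kid] at this
    simpa using this
  -- naturality of `F`
  have hFnat : ∀ (i j : J) (φ : i ⟶ j) (v : V i), F j (h φ v) = k φ (F i v) := by
    intro i j φ v
    have hfun : (fun x => F j (h φ x)) = fun x => k φ (F i x) := by
      apply (hdense (hz.to i)).equalizer
      · exact (F j).continuous.comp (h φ).continuous
      · exact (k φ).continuous.comp (F i).continuous
      · funext u
        have hmor : hz.to i ≫ φ = hz.to j := hz.hom_ext _ _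
        have l1 : h φ (h (hz.to i) u) = h (hz.to j) u := by
          rw [← hmor, hcomp]; rfl
        have l2 : k φ (k (hz.to i) (f z u)) = k (hz.to j) (f z u) := by
          rw [← hmor, kcomp]; rfl
        simp only [Function.comp_apply]
        rw [l1, hF j u, hF i u, l2]
    exact congrFun hfun v
  -- `F` is an isometry
  have hFiso : ∀ (j : J) (x : V j), ‖F j x‖ = ‖x‖ := by
    intro j x
    have hfun : (fun y => ‖F j y‖) = fun y : V j => ‖y‖ := by
      apply (hdense (hz.to j)).equalizer
      · exact continuous_norm.comp (F j).continuous
      · exact continuous_norm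
      · funext u
        simp only [Function.comp_apply]
        rw [hF j u, key (hz.to j) u]
    exact congrFun hfun x
  -- uniqueness
  have huniq : ∀ F' : ∀ j, V j →L[K] W j,
      ((∀ v : V z, F' z v = f z v) ∧
        ∀ (i j : J) (φ : i ⟶ j) (v : V i), F' j (h φ v) = k φ (F' i v)) → F' = F := by
    intro F' ⟨hz', hnat'⟩
    funext j
    ext x
    have hfun : ⇑(F' j) = ⇑(F j) := by
      apply (hdense (hz.to j)).equalizer (F' j).continuous (F j).continuous
      funext u
      simp only [Function.comp_apply]
      rw [hF j u, hnat' z j (hz.to j) u, hz' u]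
    exact congrFun hfun x
  constructor
  · exact ⟨F, ⟨hFz, hFnat⟩, huniq⟩
  · intro F' hF'
    have hEq : F' = F := huniq F' hF'
    subst hEq
    refine ⟨hFiso, fun j v hv => ?_⟩
    rw [hF j v, ← norm_sub_rev]
    exact halmost (hz.to j) v hv
end

section
/- For all real numbers r₁, r₂ > 0, the annulus algebra A_{r₁,r₂} over K is e^{−(r₁+r₂)}-rigid. -/
/-!
A `c`-close product `m` (`c < 1`) differs from the original product by a contraction, so by
Banach's fixed point theorem `m a` is bijective for every unit `a`. This gives a unit `u` of `m`
with `‖u - 1‖ ≤ c` and makes `m`-multiplication by `x` a permutation `σ`, whence `m`-powers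
`σⁿ u` of `x` for all `n : ℤ`. Since `‖xᵏ‖ = ‖x‖ᵏ` and `‖x⁻ᵏ‖ = ‖x⁻¹‖ᵏ` for `k : ℕ`, induction in
the ultrametric norm gives `‖σⁿ u - xⁿ‖ ≤ c‖xⁿ‖`. The monomials form an orthogonal Schauder basis,
so `xⁿ ↦ σⁿ u` extends to a linear map `φ` with `‖φ e - e‖ ≤ c‖e‖`, which is then a bijective
isometry; it is multiplicative because it is so on the dense span of the monomials.
-/

/-- A `c`-close product on a commutative nonarchimedean Banach algebra `A` over `K`. -/
def IsCCloseProduct {K : Type*} [NormedField K] {A : Type*} [NormedCommRing A]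
    [NormedAlgebra K A] (c : ℝ) (m : A →L[K] A →L[K] A) : Prop :=
  (∀ x y : A, m x y = m y x) ∧
  (∀ x y z : A, m (m x y) z = m x (m y z)) ∧
  (∀ x y : A, x * y ≠ 0 → ‖m x y - x * y‖ < c * ‖x * y‖) ∧
  (∀ x y : A, x * y = 0 → m x y = 0)

/-- `A` is `c`-rigid if every `c`-close product `∗` on `A` is intertwined with the
original product by a `K`-linear bijective isometry `φ` with `‖φ x − x‖ ≤ c·‖x‖`. -/
def IsCRigid (K : Type*) [NormedField K] (A : Type*) [NormedCommRing A]
    [NormedAlgebra K A] (c : ℝ) : Prop :=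
  ∀ m : A →L[K] A →L[K] A, IsCCloseProduct c m →
    ∃ φ : A →ₗ[K] A, Function.Bijective φ ∧ (∀ x : A, ‖φ x‖ = ‖x‖) ∧
      (∀ x y : A, φ (x * y) = m (φ x) (φ y)) ∧ ∀ x : A, ‖φ x - x‖ ≤ c * ‖x‖

open Set Filter

theorem IsUltrametricDist.norm_eq_of_norm_sub_le_mul {E : Type*} [NormedAddCommGroup E]
    [IsUltrametricDist E] {c : ℝ} (hc : c < 1) {p q : E}
    (h : ‖p - q‖ ≤ c * ‖q‖) : ‖p‖ = ‖q‖ := by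
  rcases eq_or_ne q 0 with rfl | hq
  · simp only [sub_zero, norm_zero, mul_zero] at h ⊢
    exact le_antisymm h (norm_nonneg p)
  have hlt : ‖p - q‖ < ‖q‖ := h.trans_lt (mul_lt_of_lt_one_left (norm_pos_iff.2 hq) hc)
  simpa [max_eq_left hlt.le] using norm_add_eq_max_of_norm_ne_norm hlt.ne'

theorem bijective_of_norm_sub_le_mul {E F : Type*} [NormedAddCommGroup E] [CompleteSpace E]
    [FunLike F E E] [AddMonoidHomClass F E E] (f : F) {c : ℝ} (hc : c < 1)
    (h : ∀ e, ‖e - f e‖ ≤ c * ‖e‖) : Function.Bijective f := by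
  refine ⟨(injective_iff_map_eq_zero f).2 fun e he => ?_, fun b => ?_⟩
  · have := h e
    rw [he, sub_zero] at this
    exact norm_eq_zero.1 (by nlinarith [norm_nonneg e])
  · -- `f e = b` is a fixed point of the contraction `e ↦ b + (e - f e)`.
    have hT : ContractingWith c.toNNReal fun e => b + (e - f e) := by
      refine ⟨Real.toNNReal_lt_one.2 hc, LipschitzWith.of_dist_le_mul fun e e' => ?_⟩
      rw [dist_eq_norm, dist_eq_norm, add_sub_add_left_eq_sub, sub_sub_sub_comm, ← map_sub]
      exact (h _).trans (mul_le_mul_of_nonneg_right (Real.le_coe_toNNReal c) (norm_nonneg _))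
    refine ⟨ContractingWith.fixedPoint _ hT, ?_⟩
    have := hT.fixedPoint_isFixedPt
    rw [Function.IsFixedPt] at this
    linear_combination (norm := abel_nf) -this

section Expansion

variable {R E ι : Type*} [Semiring R] [AddCommMonoid E] [Module R E] [TopologicalSpace E]

theorem hasSum_pi_single_one_smul [DecidableEq ι] (v : ι → E) (i : ι) :
    HasSum (fun j => (Pi.single i 1 : ι → R) j • v j) (v i) := by
  convert hasSum_pi_single i (v i) using 1
  ext j
  rcases eq_or_ne j i with rfl | hj <;> simp_all

theorem dense_span_range_of_forall_hasSum {v : ι → E}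
    (h : ∀ e, ∃ a : ι → R, HasSum (fun i => a i • v i) e) :
    Dense (Submodule.span R (range v) : Set E) := fun e => by
  obtain ⟨a, ha⟩ := h e
  exact mem_closure_of_tendsto ha (Eventually.of_forall fun s =>
    Submodule.sum_mem _ fun i _ => Submodule.smul_mem _ _ (Submodule.subset_span ⟨i, rfl⟩))

theorem exists_linearMap_forall_hasSum [ContinuousAdd E] [ContinuousConstSMul R E] {v : ι → E}
    (h : ∀ e, ∃! a : ι → R, HasSum (fun i => a i • v i) e) :
    ∃ coeff : E →ₗ[R] ι → R, ∀ e, HasSum (fun i => coeff e i • v i) e := by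
  choose a ha huniq using h
  refine ⟨{ toFun := a, map_add' := fun e f => ?_, map_smul' := fun r e => ?_ }, ha⟩
  · exact (huniq _ _ (by simpa only [Pi.add_apply, add_smul] using (ha e).add (ha f))).symm
  · exact (huniq _ _ (by simpa only [Pi.smul_apply, smul_eq_mul, mul_smul, RingHom.id_apply]
      using (ha e).const_smul r)).symm

end Expansion

section Perturbation

variable {K E ι : Type*} [NormedField K] [NormedAddCommGroup E] [NormedSpace K E]
  [IsUltrametricDist E] [CompleteSpace E] {v w : ι → E} {c : ℝ}

theorem exists_linearMap_apply_eq_of_norm_sub_le (hc : 0 ≤ c)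
    (hexp : ∀ e, ∃! a : ι → K, HasSum (fun i => a i • v i) e)
    (hbound : ∀ e (a : ι → K), HasSum (fun i => a i • v i) e → ∀ i, ‖a i‖ * ‖v i‖ ≤ ‖e‖)
    (hw : ∀ i, ‖w i - v i‖ ≤ c * ‖v i‖) :
    ∃ φ : E →ₗ[K] E, (∀ i, φ (v i) = w i) ∧ ∀ e, ‖φ e - e‖ ≤ c * ‖e‖ := by
  classical
  obtain ⟨coeff, hcoeff⟩ := exists_linearMap_forall_hasSum hexp
  have hsum : ∀ e, Summable fun i => coeff e i • (w i - v i) := fun e =>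
    NonarchimedeanAddGroup.summable_of_tendsto_cofinite_zero <| by
      refine squeeze_zero_norm (fun i => ?_)
        (((hcoeff e).summable.tendsto_cofinite_zero.norm.const_mul c).trans_eq (by simp))
      rw [norm_smul, norm_smul]
      exact (mul_le_mul_of_nonneg_left (hw i) (norm_nonneg _)).trans_eq (by ring)
  let D : E →ₗ[K] E :=
    { toFun e := ∑' i, coeff e i • (w i - v i)
      map_add' e f := by
        simp only [map_add, Pi.add_apply, add_smul]
        exact (hsum e).tsum_add (hsum f)
      map_smul' r e := by
        simp only [map_smul, Pi.smul_apply, smul_eq_mul, mul_smul, RingHom.id_apply]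
        exact (hsum e).tsum_const_smul r }
  refine ⟨LinearMap.id + D, fun i => ?_, fun e => ?_⟩
  · have hi : coeff (v i) = Pi.single i 1 :=
      (hexp (v i)).unique (hcoeff (v i)) (hasSum_pi_single_one_smul v i)
    show v i + ∑' j, coeff (v i) j • (w j - v j) = w i
    rw [hi, tsum_eq_single i fun j hj => by simp [hj]]
    simp
  · show ‖(e + ∑' i, coeff e i • (w i - v i)) - e‖ ≤ c * ‖e‖
    rw [add_sub_cancel_left]
    refine IsUltrametricDist.norm_tsum_le_of_forall_le_of_nonneg (by positivity) fun i => ?_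
    rw [norm_smul]
    calc ‖coeff e i‖ * ‖w i - v i‖ ≤ ‖coeff e i‖ * (c * ‖v i‖) := by gcongr; exact hw i
      _ = c * (‖coeff e i‖ * ‖v i‖) := by ring
      _ ≤ c * ‖e‖ := by gcongr; exact hbound e _ (hcoeff e) i

theorem exists_linearIsometryEquiv_apply_eq_of_norm_sub_le (hc0 : 0 ≤ c) (hc1 : c < 1)
    (hexp : ∀ e, ∃! a : ι → K, HasSum (fun i => a i • v i) e)
    (hbound : ∀ e (a : ι → K), HasSum (fun i => a i • v i) e → ∀ i, ‖a i‖ * ‖v i‖ ≤ ‖e‖)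
    (hw : ∀ i, ‖w i - v i‖ ≤ c * ‖v i‖) :
    ∃ φ : E ≃ₗᵢ[K] E, (∀ i, φ (v i) = w i) ∧ ∀ e, ‖φ e - e‖ ≤ c * ‖e‖ := by
  obtain ⟨φ, hφv, hφ⟩ := exists_linearMap_apply_eq_of_norm_sub_le hc0 hexp hbound hw
  have hnorm (e : E) : ‖φ e‖ = ‖e‖ := IsUltrametricDist.norm_eq_of_norm_sub_le_mul hc1 (hφ e)
  have hsurj := (bijective_of_norm_sub_le_mul φ hc1 fun e => by
    rw [norm_sub_rev]; exact hφ e).2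
  exact ⟨.ofSurjective ⟨φ, hnorm⟩ hsurj, hφv, hφ⟩

end Perturbation

theorem norm_eq_of_forall_hasSum_isLUB {K E ι : Type*} [SeminormedRing K] [NormOneClass K]
    [SeminormedAddCommGroup E] [Module K E] [DecidableEq ι] {v : ι → E} {ρ : ι → ℝ}
    (hρ : ∀ i, 0 ≤ ρ i)
    (hnorm : ∀ e (a : ι → K), HasSum (fun i => a i • v i) e →
      IsLUB (range fun i => ‖a i‖ * ρ i) ‖e‖) (i : ι) :
    ‖v i‖ = ρ i := by
  refine (hnorm _ _ (hasSum_pi_single_one_smul v i)).unique (IsGreatest.isLUB ⟨⟨i, by simp⟩, ?_⟩)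
  rintro _ ⟨j, rfl⟩
  rcases eq_or_ne j i with rfl | hj <;> simp [*]

theorem map_mul_of_forall_map_mul_of_dense_span {K A ι : Type*} [NormedField K]
    [NormedCommRing A] [NormedAlgebra K A] {φ : A →L[K] A} {m : A →L[K] A →L[K] A}
    (hcomm : ∀ a b, m a b = m b a) {v : ι → A}
    (hv : Dense (Submodule.span K (range v) : Set A))
    (h : ∀ i j, φ (v i * v j) = m (φ (v i)) (φ (v j))) (e f : A) :
    φ (e * f) = m (φ e) (φ f) := by
  let mulLeft (a : A) : A →L[K] A := (LinearMap.mulLeft K a).mkContinuous ‖a‖ (norm_mul_le a)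
  have hext (a : A) (ha : ∀ i, φ (a * v i) = m (φ a) (φ (v i))) (f : A) :
      φ (a * f) = m (φ a) (φ f) :=
    DFunLike.congr_fun (ContinuousLinearMap.ext_on hv (f := φ.comp (mulLeft a))
      (g := (m (φ a)).comp φ) (forall_mem_range.2 ha)) f
  refine hext e (fun j => ?_) f
  rw [mul_comm, hext (v j) (h j) e, hcomm]

noncomputable def annulusWeight (r₁ r₂ : ℝ) (n : ℤ) : ℝ :=
  max (Real.exp (n * r₁)) (Real.exp (-n * r₂))

theorem annulusWeight_natCast {r₁ r₂ : ℝ} (h : 0 ≤ r₁ + r₂) (k : ℕ) :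
    annulusWeight r₁ r₂ k = Real.exp r₁ ^ k := by
  rw [annulusWeight, max_eq_left (Real.exp_le_exp.2 (by push_cast; nlinarith)), Int.cast_natCast,
    Real.exp_nat_mul]

theorem annulusWeight_neg_natCast {r₁ r₂ : ℝ} (h : 0 ≤ r₁ + r₂) (k : ℕ) :
    annulusWeight r₁ r₂ (-k) = Real.exp r₂ ^ k := by
  rw [annulusWeight, max_eq_right (Real.exp_le_exp.2 (by push_cast; nlinarith)), Int.cast_neg,
    Int.cast_natCast, neg_neg, Real.exp_nat_mul]

theorem norm_pow_eq_of_norm_zpow_eq_annulusWeight {A : Type*} [NormedRing A] {r₁ r₂ : ℝ}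
    (hr : 0 ≤ r₁ + r₂) {x : Aˣ} (hx : ∀ n : ℤ, ‖((x ^ n : Aˣ) : A)‖ = annulusWeight r₁ r₂ n)
    (k : ℕ) : ‖(x : A) ^ k‖ = ‖(x : A)‖ ^ k ∧ ‖(↑x⁻¹ : A) ^ k‖ = ‖(↑x⁻¹ : A)‖ ^ k := by
  have hpos (k : ℕ) : ‖(x : A) ^ k‖ = Real.exp r₁ ^ k := by
    rw [← annulusWeight_natCast hr, ← hx, zpow_natCast, Units.val_pow_eq_pow_val]
  have hneg (k : ℕ) : ‖(↑x⁻¹ : A) ^ k‖ = Real.exp r₂ ^ k := by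
    rw [← annulusWeight_neg_natCast hr, ← hx, zpow_neg, zpow_natCast, ← inv_pow,
      Units.val_pow_eq_pow_val]
  exact ⟨by rw [hpos, ← pow_one (x : A), hpos, pow_one],
    by rw [hneg, ← pow_one (↑x⁻¹ : A), hneg, pow_one]⟩

section PermPow

variable {M : Type*} {mul : M → M → M} {x : M} {σ : Equiv.Perm M}

theorem Equiv.Perm.zpow_apply_mul_left (hassoc : ∀ a b c, mul (mul a b) c = mul a (mul b c))
    (hσ : ∀ e, σ e = mul x e) (n : ℤ) (e f : M) : (σ ^ n) (mul e f) = mul ((σ ^ n) e) f := by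
  have hinv : ∀ e f, σ⁻¹ (mul e f) = mul (σ⁻¹ e) f := fun e f => by
    rw [Equiv.Perm.inv_eq_iff_eq, hσ, ← hassoc, ← hσ, Equiv.Perm.inv_def, Equiv.apply_symm_apply]
  induction n using Int.induction_on generalizing e with
  | zero => rfl
  | succ k ih =>
    rw [zpow_add_one, Equiv.Perm.mul_apply, hσ, ← hassoc, ih, Equiv.Perm.mul_apply, hσ]
  | pred k ih => rw [zpow_sub_one, Equiv.Perm.mul_apply, hinv, ih, Equiv.Perm.mul_apply]

theorem Equiv.Perm.zpow_apply_add (hassoc : ∀ a b c, mul (mul a b) c = mul a (mul b c))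
    (hσ : ∀ e, σ e = mul x e) {u : M} (hu : ∀ e, mul u e = e) (s t : ℤ) :
    (σ ^ (s + t)) u = mul ((σ ^ s) u) ((σ ^ t) u) := by
  rw [← zpow_apply_mul_left hassoc hσ, hu, zpow_add, Equiv.Perm.mul_apply]

end PermPow

theorem norm_iterate_sub_pow_le {A : Type*} [NormedRing A] [IsUltrametricDist A] {c : ℝ}
    (hc : c < 1) {a u : A} {T : A → A}
    (hT : ∀ e, ‖T e - a * e‖ ≤ c * ‖a‖ * ‖e‖) (ha : ∀ k : ℕ, ‖a ^ k‖ = ‖a‖ ^ k)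
    (hu : ‖u - 1‖ ≤ c * ‖(1 : A)‖) (k : ℕ) : ‖T^[k] u - a ^ k‖ ≤ c * ‖a ^ k‖ := by
  induction k with
  | zero => simpa using hu
  | succ k ih =>
    set z := T^[k] u
    have hz : ‖z‖ = ‖a ^ k‖ := IsUltrametricDist.norm_eq_of_norm_sub_le_mul hc ih
    have hsplit : T^[k + 1] u - a ^ (k + 1) = (T z - a * z) + a * (z - a ^ k) := by
      rw [Function.iterate_succ_apply', pow_succ', mul_sub]
      abel
    have hpow : ‖a ^ (k + 1)‖ = ‖a‖ * ‖a ^ k‖ := by rw [ha, ha, pow_succ']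
    rw [hsplit, hpow]
    refine (IsUltrametricDist.norm_add_le_max _ _).trans (max_le ?_ ?_)
    · calc ‖T z - a * z‖ ≤ c * ‖a‖ * ‖z‖ := hT z
        _ = c * (‖a‖ * ‖a ^ k‖) := by rw [hz]; ring
    · calc ‖a * (z - a ^ k)‖ ≤ ‖a‖ * (c * ‖a ^ k‖) := by
            grw [norm_mul_le, ih]
        _ = c * (‖a‖ * ‖a ^ k‖) := by ring

namespace IsCCloseProduct

variable {K : Type*} [NormedField K] {A : Type*} [NormedCommRing A] [NormedAlgebra K A]
  {c : ℝ} {m : A →L[K] A →L[K] A}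

theorem norm_sub_mul_le (hm : IsCCloseProduct c m) (p q : A) :
    ‖m p q - p * q‖ ≤ c * ‖p * q‖ := by
  by_cases h : p * q = 0
  · simp [hm.2.2.2 p q h, h]
  · exact (hm.2.2.1 p q h).le

theorem bijective_apply_unit [CompleteSpace A] (hm : IsCCloseProduct c m) (hc : c < 1)
    (a : Aˣ) : Function.Bijective (m a) := by
  -- `e ↦ m a (a⁻¹ * e)` is `c`-close to the identity.
  let G : A →ₗ[K] A := (m a : A →ₗ[K] A) ∘ₗ LinearMap.mulLeft K (↑a⁻¹ : A)
  have hG : Function.Bijective G := bijective_of_norm_sub_le_mul G hc fun e => by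
    have := hm.norm_sub_mul_le a (↑a⁻¹ * e)
    rwa [Units.mul_inv_cancel_left, norm_sub_rev] at this
  convert hG.comp (Units.mulLeft_bijective a) using 1
  ext e
  simp [G]

variable [IsUltrametricDist A]

theorem norm_apply (hm : IsCCloseProduct c m) (hc : c < 1) (p q : A) : ‖m p q‖ = ‖p * q‖ :=
  IsUltrametricDist.norm_eq_of_norm_sub_le_mul hc (hm.norm_sub_mul_le p q)

theorem norm_sub_inv_mul_le (hm : IsCCloseProduct c m) (hc : c < 1) (a : Aˣ) (f : A) :
    ‖f - ↑a⁻¹ * m a f‖ ≤ c * ‖(↑a⁻¹ : A)‖ * ‖m a f‖ := by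
  have : f - ↑a⁻¹ * m a f = ↑a⁻¹ * (a * f - m a f) := by
    rw [mul_sub, Units.inv_mul_cancel_left]
  rw [this, hm.norm_apply hc]
  calc _ ≤ ‖(↑a⁻¹ : A)‖ * ‖a * f - m a f‖ := norm_mul_le _ _
    _ ≤ ‖(↑a⁻¹ : A)‖ * (c * ‖a * f‖) := by
        gcongr; rw [norm_sub_rev]; exact hm.norm_sub_mul_le _ _
    _ = _ := by ring

theorem exists_unit [CompleteSpace A] (hm : IsCCloseProduct c m) (hc : c < 1) :
    ∃ u : A, (∀ e, m u e = e) ∧ ‖u - 1‖ ≤ c * ‖(1 : A)‖ := by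
  have h1 := hm.bijective_apply_unit hc 1
  obtain ⟨u, hu⟩ := h1.2 1
  simp only [Units.val_one] at h1 hu
  refine ⟨u, fun e => h1.1 ?_, ?_⟩
  · rw [← hm.2.1, hu]
  · have hu1 : ‖u‖ = ‖(1 : A)‖ := by rw [← hu, hm.norm_apply hc, one_mul]
    have := hm.norm_sub_mul_le 1 u
    rwa [one_mul, hu, norm_sub_rev, hu1] at this

theorem norm_zpow_apply_sub_le (hm : IsCCloseProduct c m) (hc0 : 0 ≤ c) (hc : c < 1) {x : Aˣ}
    (hpow : ∀ k : ℕ, ‖(x : A) ^ k‖ = ‖(x : A)‖ ^ k ∧ ‖(↑x⁻¹ : A) ^ k‖ = ‖(↑x⁻¹ : A)‖ ^ k)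
    {σ : Equiv.Perm A} (hσ : ∀ e, σ e = m x e) {u : A} (hu : ‖u - 1‖ ≤ c * ‖(1 : A)‖) (n : ℤ) :
    ‖(σ ^ n) u - ↑(x ^ n)‖ ≤ c * ‖((x ^ n : Aˣ) : A)‖ := by
  obtain ⟨k, rfl | rfl⟩ := Int.eq_nat_or_neg n
  · have := norm_iterate_sub_pow_le hc (T := σ) (fun e => ?_) (fun k => (hpow k).1) hu k
    · simpa [Equiv.Perm.coe_pow] using this
    · grw [hσ, hm.norm_sub_mul_le, norm_mul_le, mul_assoc]
  · have := norm_iterate_sub_pow_le hc (T := ⇑σ⁻¹) (fun e => ?_) (fun k => (hpow k).2) hu k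
    · simpa [Equiv.Perm.coe_pow, zpow_neg, ← inv_pow] using this
    · simpa [← hσ] using hm.norm_sub_inv_mul_le hc x (σ⁻¹ e)

end IsCCloseProduct

theorem annulusAlgebra_isCRigid_general
    {K : Type*} [NormedField K]
    {A : Type*} [NormedCommRing A] [NormedAlgebra K A] [CompleteSpace A]
    [IsUltrametricDist A]
    (r₁ r₂ : ℝ) (hr₁ : 0 < r₁) (hr₂ : 0 < r₂)
    (x : Aˣ)
    (hexp : ∀ e : A, ∃! a : ℤ → K,
      HasSum (fun n : ℤ => a n • ((x ^ n : Aˣ) : A)) e)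
    (hnorm : ∀ (e : A) (a : ℤ → K),
      HasSum (fun n : ℤ => a n • ((x ^ n : Aˣ) : A)) e →
      IsLUB (Set.range fun n : ℤ =>
        ‖a n‖ * max (Real.exp ((n : ℝ) * r₁)) (Real.exp (-(n : ℝ) * r₂))) ‖e‖) :
    IsCRigid K A (Real.exp (-(r₁ + r₂))) := by
  intro m hm
  have hc : Real.exp (-(r₁ + r₂)) < 1 := Real.exp_lt_one_iff.2 (by linarith)
  have hxn : ∀ n : ℤ, ‖((x ^ n : Aˣ) : A)‖ = annulusWeight r₁ r₂ n :=
    norm_eq_of_forall_hasSum_isLUB (fun n => (Real.exp_pos _).le.trans (le_max_left _ _)) hnorm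
  have hpow := norm_pow_eq_of_norm_zpow_eq_annulusWeight (by linarith) hxn
  obtain ⟨u, hu, hu1⟩ := hm.exists_unit hc
  let σ : Equiv.Perm A := .ofBijective (m x) (hm.bijective_apply_unit hc x)
  have hσ (e : A) : σ e = m x e := rfl
  obtain ⟨φ, hφx, hφ⟩ := exists_linearIsometryEquiv_apply_eq_of_norm_sub_le
    (v := fun n : ℤ => ((x ^ n : Aˣ) : A)) (Real.exp_pos _).le hc hexp
    (fun e a ha n => hxn n ▸ (hnorm e a ha).1 (mem_range_self n))
    (hm.norm_zpow_apply_sub_le (Real.exp_pos _).le hc hpow hσ hu1)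
  refine ⟨φ.toLinearEquiv.toLinearMap, φ.bijective, φ.norm_map, fun e f => ?_, hφ⟩
  refine map_mul_of_forall_map_mul_of_dense_span (φ := φ.toContinuousLinearEquiv) hm.1
    (dense_span_range_of_forall_hasSum fun e => (hexp e).exists) (fun i j => ?_) e f
  change φ _ = m (φ _) (φ _)
  rw [← Units.val_mul, ← zpow_add, hφx, hφx, hφx]
  exact Equiv.Perm.zpow_apply_add (mul := fun a b => m a b) hm.2.1 hσ hu i j

/-- rigidity of the annulus algebra. For all `r₁, r₂ > 0`, the algebra
`A_{r₁,r₂}` of analytic functions on the annulus `{e^{−r₂} ≤ |x| ≤ e^{r₁}}` is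
`e^{−(r₁+r₂)}`-rigid. The annulus algebra is characterized (up to isometric isomorphism
of Banach algebras) as a commutative nonarchimedean Banach algebra `A` over `K` with an
invertible element `x` such that every `e ∈ A` has a unique convergent Laurent expansion
`e = Σ_{n∈ℤ} aₙ • xⁿ` and `‖e‖ = sup_n ‖aₙ‖·max(e^{n r₁}, e^{−n r₂})`. -/
theorem annulusAlgebra_isCRigid
    {K : Type*} [NormedField K] [IsUltrametricDist K] [CompleteSpace K]
    {A : Type*} [NormedCommRing A] [NormedAlgebra K A] [CompleteSpace A]
    [IsUltrametricDist A]
    (r₁ r₂ : ℝ) (hr₁ : 0 < r₁) (hr₂ : 0 < r₂)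
    (x : Aˣ)
    (hexp : ∀ e : A, ∃! a : ℤ → K,
      HasSum (fun n : ℤ => a n • ((x ^ n : Aˣ) : A)) e)
    (hnorm : ∀ (e : A) (a : ℤ → K),
      HasSum (fun n : ℤ => a n • ((x ^ n : Aˣ) : A)) e →
      IsLUB (Set.range fun n : ℤ =>
        ‖a n‖ * max (Real.exp ((n : ℝ) * r₁)) (Real.exp (-(n : ℝ) * r₂))) ‖e‖) :
    IsCRigid K A (Real.exp (-(r₁ + r₂))) :=
  annulusAlgebra_isCRigid_general r₁ r₂ hr₁ hr₂ x hexp hnorm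
end

section
/- For every m ≥ 1 and all real numbers r_{j,1}, r_{j,2} > 0 (1 ≤ j ≤ m), the polyannulus algebra over K with parameters (r_{j,1}, r_{j,2})_{1≤j≤m} is c-rigid for c = e^{−max_{1≤j≤m}(r_{j,1}+r_{j,2})}. -/
open IsUltrametricDist Filter

section UltraHelpers
variable {A : Type*} [SeminormedAddCommGroup A] [IsUltrametricDist A]

private lemma norm_hasSum_le {ι : Type*} {f : ι → A} {a : A} (h : HasSum f a) {C : ℝ}
    (hC : 0 ≤ C) (hf : ∀ i, ‖f i‖ ≤ C) : ‖a‖ ≤ C := by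
  have ht : Tendsto (fun t : Finset ι => ‖∑ i ∈ t, f i‖) atTop (nhds ‖a‖) :=
    (continuous_norm.tendsto a).comp h
  refine le_of_tendsto ht (Eventually.of_forall fun t => ?_)
  exact norm_sum_le_of_forall_le_of_nonneg hC fun i _ => hf i

private lemma norm_eq_of_close {a b : A} (h : ‖b - a‖ < ‖a‖) : ‖b‖ = ‖a‖ := by
  have h1 : ‖b‖ ≤ ‖a‖ := by
    calc ‖b‖ = ‖(b - a) + a‖ := by rw [sub_add_cancel]
    _ ≤ max ‖b - a‖ ‖a‖ := norm_add_le_max _ _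
    _ ≤ ‖a‖ := max_le h.le le_rfl
  refine le_antisymm h1 ?_
  by_contra hlt
  push_neg at hlt
  have h2 : ‖a‖ ≤ max ‖a - b‖ ‖b‖ := by
    calc ‖a‖ = ‖(a - b) + b‖ := by rw [sub_add_cancel]
    _ ≤ _ := norm_add_le_max _ _
  rw [norm_sub_rev] at h
  exact (h2.trans_lt (max_lt h hlt)).false

end UltraHelpers

private lemma surj_of_close {A : Type*} [NormedAddCommGroup A] [CompleteSpace A]
    (T : A → A) (hadd : ∀ u v : A, T (u + v) = T u + T v) (hT : Continuous T)
    {c : ℝ} (hc0 : 0 ≤ c) (hc1 : c < 1) (hclose : ∀ u, ‖T u - u‖ ≤ c * ‖u‖) (b : A) :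
    ∃ a : A, T a = b := by
  let a : ℕ → A := fun k => Nat.recAux b (fun _ ak => ak + (b - T ak)) k
  have ha : ∀ k, a (k + 1) = a k + (b - T (a k)) := fun k => rfl
  set d : ℕ → A := fun k => b - T (a k) with hd
  have hdstep : ∀ k, d (k + 1) = d k - T (d k) := by
    intro k
    simp only [hd, ha, hadd]
    abel
  have hdnorm : ∀ k, ‖d (k + 1)‖ ≤ c * ‖d k‖ := by
    intro k
    rw [hdstep k, norm_sub_rev]
    exact hclose (d k)
  have hgeom : ∀ k, ‖d k‖ ≤ ‖d 0‖ * c ^ k := by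
    intro k
    induction k with
    | zero => simp
    | succ k ih =>
      calc ‖d (k+1)‖ ≤ c * ‖d k‖ := hdnorm k
      _ ≤ c * (‖d 0‖ * c ^ k) := mul_le_mul_of_nonneg_left ih hc0
      _ = ‖d 0‖ * c ^ (k + 1) := by ring
  have hcauchy : CauchySeq a := by
    refine cauchySeq_of_le_geometric c ‖d 0‖ hc1 fun k => ?_
    rw [dist_eq_norm, ha k]
    have heq : a k - (a k + (b - T (a k))) = -(b - T (a k)) := by abel
    rw [heq, norm_neg]
    exact hgeom k
  obtain ⟨l, hl⟩ := cauchySeq_tendsto_of_complete hcauchy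
  refine ⟨l, ?_⟩
  have hd0 : Tendsto d atTop (nhds 0) := by
    refine squeeze_zero_norm hgeom ?_
    simpa using (tendsto_pow_atTop_nhds_zero_of_lt_one hc0 hc1).const_mul ‖d 0‖
  have h1 : Tendsto (fun k => T (a k)) atTop (nhds (T l)) := (hT.tendsto l).comp hl
  have h2 : Tendsto (fun k => T (a k)) atTop (nhds b) := by
    have heq : (fun k => T (a k)) = fun k => b - d k := by funext k; simp [hd]
    rw [heq]
    simpa using tendsto_const_nhds.sub hd0
  exact tendsto_nhds_unique h1 h2

private def WrapA (A : Type*) : Type _ := A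

private lemma prod_zpow_update {G : Type*} [CommGroup G] {m : ℕ} (X : Fin m → G)
    (n : Fin m → ℤ) (j : Fin m) (v : ℤ) :
    ∏ j', X j' ^ n j' = (∏ j', X j' ^ Function.update n j v j') * X j ^ (n j - v) := by
  rw [← Finset.mul_prod_erase Finset.univ (fun j' => X j' ^ n j') (Finset.mem_univ j),
      ← Finset.mul_prod_erase Finset.univ (fun j' => X j' ^ Function.update n j v j')
        (Finset.mem_univ j)]
  have h1 : ∏ j' ∈ Finset.univ.erase j, X j' ^ Function.update n j v j'
      = ∏ j' ∈ Finset.univ.erase j, X j' ^ n j' :=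
    Finset.prod_congr rfl fun j' hj' => by
      rw [Function.update_of_ne (Finset.ne_of_mem_erase hj')]
  rw [h1, Function.update_self]
  calc X j ^ n j * ∏ j' ∈ Finset.univ.erase j, X j' ^ n j'
      = X j ^ (v + (n j - v)) * ∏ j' ∈ Finset.univ.erase j, X j' ^ n j' := by
        rw [add_sub_cancel]
    _ = (X j ^ v * X j ^ (n j - v)) * ∏ j' ∈ Finset.univ.erase j, X j' ^ n j' := by
        rw [zpow_add]
    _ = _ := mul_right_comm _ _ _

section Pmon
variable {A : Type*} [NormedCommRing A] {m : ℕ}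

/-- the Laurent monomial `x^n`. -/
private abbrev Pmon (x : Fin m → Aˣ) (n : Fin m → ℤ) : A := ∏ j, ((x j ^ n j : Aˣ) : A)

private lemma Pmon_units (x : Fin m → Aˣ) (n : Fin m → ℤ) :
    Pmon x n = ((∏ j, x j ^ n j : Aˣ) : A) :=
  (map_prod (Units.coeHom A) _ _).symm

private lemma Pmon_mul (x : Fin m → Aˣ) (n k : Fin m → ℤ) :
    Pmon x n * Pmon x k = Pmon x (n + k) := by
  rw [← Finset.prod_mul_distrib]
  refine Finset.prod_congr rfl fun j _ => ?_
  rw [Pi.add_apply, zpow_add, Units.val_mul]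

private lemma Pmon_zero (x : Fin m → Aˣ) : Pmon x 0 = 1 := by
  simp [Pmon]

private lemma Pmon_single (x : Fin m → Aˣ) (j : Fin m) :
    Pmon x (Pi.single j 1) = x j := by
  rw [Pmon, Finset.prod_eq_single j]
  · rw [Pi.single_eq_same, zpow_one]
  · intro j' _ hj'
    rw [Pi.single_eq_of_ne hj', zpow_zero, Units.val_one]
  · exact fun h => absurd (Finset.mem_univ j) h

private lemma Pmon_single_neg (x : Fin m → Aˣ) (j : Fin m) :
    Pmon x (-Pi.single j 1) = ((x j)⁻¹ : Aˣ) := by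
  rw [Pmon, Finset.prod_eq_single j]
  · rw [Pi.neg_apply, Pi.single_eq_same, zpow_neg, zpow_one]
  · intro j' _ hj'
    rw [Pi.neg_apply, Pi.single_eq_of_ne hj', neg_zero, zpow_zero, Units.val_one]
  · exact fun h => absurd (Finset.mem_univ j) h

private lemma Pmon_update (x : Fin m → Aˣ) (n : Fin m → ℤ) (j : Fin m) (v : ℤ) :
    Pmon x n = Pmon x (Function.update n j v) * ((x j ^ (n j - v) : Aˣ) : A) := by
  rw [Pmon_units, Pmon_units, prod_zpow_update x n j v, Units.val_mul]

end Pmon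

section Rho
variable {m : ℕ} (r₁ r₂ : Fin m → ℝ)

/-- the weight `ρ(n)`. -/
private noncomputable abbrev rho (n : Fin m → ℤ) : ℝ :=
  ∏ j, max (Real.exp ((n j : ℝ) * r₁ j)) (Real.exp (-(n j : ℝ) * r₂ j))

private lemma rho_pos (n : Fin m → ℤ) : 0 < rho r₁ r₂ n :=
  Finset.prod_pos fun j _ => lt_max_iff.2 (Or.inl (Real.exp_pos _))

private lemma rho_zero : rho r₁ r₂ 0 = 1 := by
  simp [rho]

variable {r₁ r₂} {j : Fin m}

private lemma rho_single (h₁ : 0 < r₁ j) (h₂ : 0 < r₂ j) :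
    rho r₁ r₂ (Pi.single j 1) = Real.exp (r₁ j) := by
  rw [rho, Finset.prod_eq_single j]
  · rw [Pi.single_eq_same]
    push_cast
    rw [neg_one_mul, one_mul]
    exact max_eq_left (Real.exp_le_exp.2 (by linarith))
  · intro j' _ hj'
    rw [Pi.single_eq_of_ne hj']
    push_cast
    simp
  · exact fun h => absurd (Finset.mem_univ j) h

private lemma rho_single_neg (h₁ : 0 < r₁ j) (h₂ : 0 < r₂ j) :
    rho r₁ r₂ (-Pi.single j 1) = Real.exp (r₂ j) := by
  rw [rho, Finset.prod_eq_single j]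
  · rw [Pi.neg_apply, Pi.single_eq_same]
    push_cast
    rw [neg_one_mul, neg_neg, one_mul]
    exact max_eq_right (Real.exp_le_exp.2 (by linarith))
  · intro j' _ hj'
    rw [Pi.neg_apply, Pi.single_eq_of_ne hj']
    push_cast
    simp
  · exact fun h => absurd (Finset.mem_univ j) h

private lemma rho_factor_nonneg {n : Fin m → ℤ} (h₁ : 0 < r₁ j) (h₂ : 0 < r₂ j)
    (h : 0 ≤ n j) :
    max (Real.exp ((n j : ℝ) * r₁ j)) (Real.exp (-(n j : ℝ) * r₂ j))
      = Real.exp ((n j : ℝ) * r₁ j) := by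
  refine max_eq_left (Real.exp_le_exp.2 ?_)
  have h' : (0:ℝ) ≤ (n j : ℝ) := by exact_mod_cast h
  nlinarith

private lemma rho_factor_nonpos {n : Fin m → ℤ} (h₁ : 0 < r₁ j) (h₂ : 0 < r₂ j)
    (h : n j ≤ 0) :
    max (Real.exp ((n j : ℝ) * r₁ j)) (Real.exp (-(n j : ℝ) * r₂ j))
      = Real.exp (-(n j : ℝ) * r₂ j) := by
  refine max_eq_right (Real.exp_le_exp.2 ?_)
  have h' : ((n j : ℝ)) ≤ 0 := by exact_mod_cast h
  nlinarith

private lemma rho_update_pos (h₁ : 0 < r₁ j) (h₂ : 0 < r₂ j) {n : Fin m → ℤ}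
    (h : 1 ≤ n j) :
    rho r₁ r₂ n = rho r₁ r₂ (Function.update n j (n j - 1)) * Real.exp (r₁ j) := by
  set Q := ∏ j' ∈ Finset.univ.erase j,
      max (Real.exp ((n j' : ℝ) * r₁ j')) (Real.exp (-(n j' : ℝ) * r₂ j')) with hQ
  have e1 : rho r₁ r₂ n = Real.exp ((n j : ℝ) * r₁ j) * Q := by
    rw [rho, ← Finset.mul_prod_erase Finset.univ _ (Finset.mem_univ j), ← hQ,
        rho_factor_nonneg h₁ h₂ (by omega : (0:ℤ) ≤ n j)]
  have e2 : rho r₁ r₂ (Function.update n j (n j - 1))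
      = Real.exp (((n j : ℝ) - 1) * r₁ j) * Q := by
    rw [rho, ← Finset.mul_prod_erase Finset.univ _ (Finset.mem_univ j),
        rho_factor_nonneg (n := Function.update n j (n j - 1)) h₁ h₂
          (by rw [Function.update_self]; omega)]
    congr 1
    · rw [Function.update_self]; push_cast; ring_nf
    · rw [hQ]
      exact Finset.prod_congr rfl fun j' hj' => by
        rw [Function.update_of_ne (Finset.ne_of_mem_erase hj')]
  rw [e1, e2, mul_right_comm, ← Real.exp_add]
  congr 2
  ring

private lemma rho_update_neg (h₁ : 0 < r₁ j) (h₂ : 0 < r₂ j) {n : Fin m → ℤ}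
    (h : n j ≤ -1) :
    rho r₁ r₂ n = rho r₁ r₂ (Function.update n j (n j + 1)) * Real.exp (r₂ j) := by
  set Q := ∏ j' ∈ Finset.univ.erase j,
      max (Real.exp ((n j' : ℝ) * r₁ j')) (Real.exp (-(n j' : ℝ) * r₂ j')) with hQ
  have e1 : rho r₁ r₂ n = Real.exp (-(n j : ℝ) * r₂ j) * Q := by
    rw [rho, ← Finset.mul_prod_erase Finset.univ _ (Finset.mem_univ j), ← hQ,
        rho_factor_nonpos h₁ h₂ (by omega : n j ≤ 0)]
  have e2 : rho r₁ r₂ (Function.update n j (n j + 1))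
      = Real.exp (-((n j : ℝ) + 1) * r₂ j) * Q := by
    rw [rho, ← Finset.mul_prod_erase Finset.univ _ (Finset.mem_univ j),
        rho_factor_nonpos (n := Function.update n j (n j + 1)) h₁ h₂
          (by rw [Function.update_self]; omega)]
    congr 1
    · rw [Function.update_self]; push_cast; ring_nf
    · rw [hQ]
      exact Finset.prod_congr rfl fun j' hj' => by
        rw [Function.update_of_ne (Finset.ne_of_mem_erase hj')]
  rw [e1, e2, mul_right_comm, ← Real.exp_add]
  congr 2
  ring

end Rho

set_option maxHeartbeats 2000000 in
/-- rigidity of the polyannulus algebra. For every `m ≥ 1` and all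
`r_{j,1}, r_{j,2} > 0`, the algebra of analytic functions on the polyannulus
`∏_j {e^{−r_{j,2}} ≤ |x_j| ≤ e^{r_{j,1}}}` is `c`-rigid for
`c = e^{−max_j (r_{j,1}+r_{j,2})}`. The polyannulus algebra is characterized (up to
isometric isomorphism of Banach algebras) as a commutative nonarchimedean Banach algebra
`A` over `K` with invertible elements `x 1, …, x m` such that every `e ∈ A` has a unique
convergent Laurent expansion `e = Σ_{n∈ℤᵐ} a_n • x^n` and
`‖e‖ = sup_n ‖a_n‖·∏_j max(e^{n_j r_{j,1}}, e^{−n_j r_{j,2}})`. -/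
theorem polyannulusAlgebra_isCRigid
    {K : Type*} [NormedField K] [IsUltrametricDist K] [CompleteSpace K]
    {A : Type*} [NormedCommRing A] [NormedAlgebra K A] [CompleteSpace A]
    [IsUltrametricDist A]
    (m : ℕ) (hm : 1 ≤ m) (r₁ r₂ : Fin m → ℝ)
    (hr₁ : ∀ j, 0 < r₁ j) (hr₂ : ∀ j, 0 < r₂ j)
    (x : Fin m → Aˣ)
    (hexp : ∀ e : A, ∃! a : (Fin m → ℤ) → K,
      HasSum (fun n : Fin m → ℤ => a n • ∏ j : Fin m, ((x j ^ n j : Aˣ) : A)) e)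
    (hnorm : ∀ (e : A) (a : (Fin m → ℤ) → K),
      HasSum (fun n : Fin m → ℤ => a n • ∏ j : Fin m, ((x j ^ n j : Aˣ) : A)) e →
      IsLUB (Set.range fun n : Fin m → ℤ =>
        ‖a n‖ * ∏ j : Fin m,
          max (Real.exp ((n j : ℝ) * r₁ j)) (Real.exp (-(n j : ℝ) * r₂ j))) ‖e‖) :
    IsCRigid K A (Real.exp (-(⨆ j : Fin m, (r₁ j + r₂ j)))) := by
  intro s hs
  obtain ⟨scomm, sassoc, sclose, szero⟩ := hs
  set c : ℝ := Real.exp (-(⨆ j : Fin m, (r₁ j + r₂ j))) with hcdef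
  have hc0 : 0 < c := Real.exp_pos _
  have hc1 : c < 1 := by
    rw [hcdef]
    have hub := le_ciSup (Finite.bddAbove_range fun j => r₁ j + r₂ j) (⟨0, hm⟩ : Fin m)
    have hpos : 0 < r₁ ⟨0, hm⟩ + r₂ ⟨0, hm⟩ := by
      have := hr₁ ⟨0, hm⟩; have := hr₂ ⟨0, hm⟩; linarith
    calc Real.exp (-⨆ j : Fin m, (r₁ j + r₂ j)) < Real.exp 0 :=
          Real.exp_lt_exp.2 (by linarith)
      _ = 1 := Real.exp_zero
  -- closeness in ≤ form
  have key : ∀ u v : A, ‖s u v - u * v‖ ≤ c * ‖u * v‖ := by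
    intro u v
    rcases eq_or_ne (u * v) 0 with h | h
    · simp [szero u v h, h]
    · exact (sclose u v h).le
  -- norms of monomials
  have hsum_ind : ∀ n, HasSum (fun k => (if k = n then (1:K) else 0) • Pmon x k) (Pmon x n) := by
    intro n
    have heq : (fun k => (if k = n then (1:K) else 0) • Pmon x k)
        = fun k => if k = n then Pmon x n else 0 := by
      funext k
      by_cases h : k = n
      · subst h; simp
      · simp [h]
    rw [heq]
    exact hasSum_ite_eq n (Pmon x n)
  have hPnorm : ∀ n, ‖Pmon x n‖ = rho r₁ r₂ n := by
    intro n
    have hl : IsLUB (Set.range fun k => ‖(if k = n then (1:K) else 0)‖ * rho r₁ r₂ k)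
        ‖Pmon x n‖ := hnorm (Pmon x n) _ (hsum_ind n)
    have hfun : (fun k => ‖(if k = n then (1:K) else 0)‖ * rho r₁ r₂ k)
        = fun k => if k = n then rho r₁ r₂ n else 0 := by
      funext k
      by_cases h : k = n
      · subst h; simp
      · simp [h]
    rw [hfun] at hl
    have hl2 : IsLUB (Set.range fun k => if k = n then rho r₁ r₂ n else 0) (rho r₁ r₂ n) := by
      constructor
      · rintro _ ⟨k, rfl⟩
        by_cases h : k = n
        · simp [h]
        · simp [h, (rho_pos r₁ r₂ n).le]
      · intro b hb
        exact hb ⟨n, by simp⟩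
    exact hl.unique hl2
  have hnorm1 : ‖(1 : A)‖ = 1 := by
    have := hPnorm 0
    rwa [Pmon_zero, rho_zero] at this
  have hxnorm : ∀ j, ‖((x j : Aˣ) : A)‖ = Real.exp (r₁ j) := by
    intro j
    have := hPnorm (Pi.single j 1)
    rwa [Pmon_single, rho_single (hr₁ j) (hr₂ j)] at this
  have hxinvnorm : ∀ j, ‖(((x j)⁻¹ : Aˣ) : A)‖ = Real.exp (r₂ j) := by
    intro j
    have := hPnorm (-Pi.single j 1)
    rwa [Pmon_single_neg, rho_single_neg (hr₁ j) (hr₂ j)] at this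
  -- the ∗-identity e
  have hLclose : ∀ u : A, ‖s 1 u - u‖ ≤ c * ‖u‖ := by
    intro u
    have := key 1 u
    rwa [one_mul] at this
  have hLiso : ∀ u : A, ‖s 1 u‖ = ‖u‖ := by
    intro u
    rcases eq_or_ne u 0 with rfl | hu
    · simp
    · exact norm_eq_of_close ((hLclose u).trans_lt
        (mul_lt_of_lt_one_left (norm_pos_iff.2 hu) hc1))
  have hLinj : Function.Injective fun u : A => s 1 u := by
    intro u v huv
    have h0 : s 1 (u - v) = 0 := by
      rw [map_sub]
      simpa [sub_eq_zero] using huv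
    have := hLiso (u - v)
    rw [h0, norm_zero] at this
    exact sub_eq_zero.1 (norm_eq_zero.1 this.symm)
  obtain ⟨e, he⟩ : ∃ a : A, s 1 a = 1 :=
    surj_of_close (fun u => s 1 u) (fun u v => map_add _ u v) (s 1).continuous
      hc0.le hc1 hLclose 1
  have he_mul : ∀ u : A, s e u = u := by
    intro u
    apply hLinj
    show s 1 (s e u) = s 1 u
    rw [← sassoc 1 e u, he]
  have he1 : ‖e - 1‖ ≤ c := by
    have h1 : ‖e - 1‖ ≤ c * ‖e‖ := by
      have := hLclose e
      calc ‖e - 1‖ = ‖s 1 e - e‖ := by rw [norm_sub_rev, he]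
      _ ≤ c * ‖e‖ := this
    have he_le : ‖e‖ ≤ 1 := by
      by_contra hgt
      push_neg at hgt
      have h2 : ‖e‖ ≤ max (c * ‖e‖) 1 := by
        calc ‖e‖ = ‖(e - 1) + 1‖ := by rw [sub_add_cancel]
        _ ≤ max ‖e - 1‖ ‖(1:A)‖ := IsUltrametricDist.norm_add_le_max _ _
        _ ≤ max (c * ‖e‖) 1 := by rw [hnorm1]; exact max_le_max h1 le_rfl
      have h3 : max (c * ‖e‖) 1 < ‖e‖ :=
        max_lt (mul_lt_of_lt_one_left (one_pos.trans hgt) hc1) hgt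
      exact (h2.trans_lt h3).false
    exact h1.trans (mul_le_of_le_one_right hc0.le he_le)
  have henorm : ‖e‖ = 1 := by
    rcases eq_or_lt_of_le he1 with h | h
    · rw [← hnorm1]
      exact norm_eq_of_close (by rw [hnorm1]; exact he1.trans_lt hc1)
    · rw [← hnorm1]
      exact norm_eq_of_close (by rw [hnorm1]; exact he1.trans_lt hc1)
  -- ∗-inverses of the x j
  have hT : ∀ j : Fin m, ∀ u : A, ‖s (x j) ((((x j)⁻¹ : Aˣ) : A) * u) - u‖ ≤ c * ‖u‖ := by
    intro j u
    have hxx : ((x j : Aˣ) : A) * ((((x j)⁻¹ : Aˣ) : A) * u) = u := Units.mul_inv_cancel_left _ _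
    have := key ((x j : Aˣ) : A) ((((x j)⁻¹ : Aˣ) : A) * u)
    rwa [hxx] at this
  have hzex : ∀ j : Fin m, ∃ w : A, s (x j) ((((x j)⁻¹ : Aˣ) : A) * w) = e := by
    intro j
    refine surj_of_close _ (fun u v => ?_) ?_ hc0.le hc1 (hT j) e
    · rw [mul_add, map_add]
    · exact (s (x j)).continuous.comp (continuous_const.mul continuous_id)
  set w : Fin m → A := fun j => (hzex j).choose with hwdef
  have hw : ∀ j, s (x j) ((((x j)⁻¹ : Aˣ) : A) * w j) = e := fun j => (hzex j).choose_spec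
  set z : Fin m → A := fun j => (((x j)⁻¹ : Aˣ) : A) * w j with hzdef
  have hxz : ∀ j, s (x j) (z j) = e := hw
  have hw_le : ∀ j, ‖w j‖ ≤ 1 := by
    intro j
    by_contra hgt
    push_neg at hgt
    have h1 : ‖w j - e‖ ≤ c * ‖w j‖ := by
      have := hT j (w j)
      rw [hw j, norm_sub_rev] at this
      exact this
    have h2 : ‖w j‖ ≤ max (c * ‖w j‖) 1 := by
      calc ‖w j‖ = ‖(w j - e) + e‖ := by rw [sub_add_cancel]
      _ ≤ max ‖w j - e‖ ‖e‖ := IsUltrametricDist.norm_add_le_max _ _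
      _ ≤ max (c * ‖w j‖) 1 := by rw [henorm]; exact max_le_max h1 le_rfl
    have h3 : max (c * ‖w j‖) 1 < ‖w j‖ :=
      max_lt (mul_lt_of_lt_one_left (one_pos.trans hgt) hc1) hgt
    exact (h2.trans_lt h3).false
  have hw1 : ∀ j, ‖w j - 1‖ ≤ c := by
    intro j
    have h1 : ‖w j - e‖ ≤ c * ‖w j‖ := by
      have := hT j (w j)
      rw [hw j, norm_sub_rev] at this
      exact this
    calc ‖w j - 1‖ = ‖(w j - e) + (e - 1)‖ := by abel_nf
    _ ≤ max ‖w j - e‖ ‖e - 1‖ := IsUltrametricDist.norm_add_le_max _ _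
    _ ≤ c := max_le (h1.trans (mul_le_of_le_one_right hc0.le (hw_le j))) he1
  have hz_close : ∀ j, ‖z j - (((x j)⁻¹ : Aˣ) : A)‖ ≤ c * Real.exp (r₂ j) := by
    intro j
    have heq : z j - (((x j)⁻¹ : Aˣ) : A) = (((x j)⁻¹ : Aˣ) : A) * (w j - 1) := by
      rw [hzdef]
      simp [mul_sub]
    rw [heq]
    calc ‖(((x j)⁻¹ : Aˣ) : A) * (w j - 1)‖ ≤ ‖(((x j)⁻¹ : Aˣ) : A)‖ * ‖w j - 1‖ :=
        norm_mul_le _ _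
    _ ≤ Real.exp (r₂ j) * c := by
        rw [hxinvnorm j]
        exact mul_le_mul_of_nonneg_left (hw1 j) (Real.exp_pos _).le
    _ = c * Real.exp (r₂ j) := mul_comm _ _
  have hz_le : ∀ j, ‖z j‖ ≤ Real.exp (r₂ j) := by
    intro j
    calc ‖z j‖ ≤ ‖(((x j)⁻¹ : Aˣ) : A)‖ * ‖w j‖ := norm_mul_le _ _
    _ ≤ Real.exp (r₂ j) * 1 := by
        rw [hxinvnorm j]
        exact mul_le_mul_of_nonneg_left (hw_le j) (Real.exp_pos _).le
    _ = Real.exp (r₂ j) := mul_one _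
  -- the ∗-monoid structure
  letI : CommMonoid (WrapA A) :=
  { mul := fun a b => show WrapA A from s a b
    one := show WrapA A from e
    mul_assoc := fun a b c' => sassoc a b c'
    one_mul := fun a => he_mul a
    mul_one := fun a => (scomm a e).trans (he_mul a)
    mul_comm := fun a b => scomm a b }
  set X : Fin m → (WrapA A)ˣ := fun j =>
    { val := show WrapA A from (x j : A), inv := show WrapA A from z j,
      val_inv := hxz j, inv_val := (scomm (z j) (x j)).trans (hxz j) } with hXdef
  set SPu : (Fin m → ℤ) → (WrapA A)ˣ := fun n => ∏ j, X j ^ n j with hSPudef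
  set SP : (Fin m → ℤ) → A := fun n => show A from ((SPu n : (WrapA A)ˣ) : WrapA A) with hSPdef
  have hSPadd : ∀ n k, SP (n + k) = s (SP n) (SP k) := by
    intro n k
    have hu : SPu (n + k) = SPu n * SPu k := by
      rw [hSPudef]
      simp only [Pi.add_apply, zpow_add, Finset.prod_mul_distrib]
    exact congrArg (fun u : (WrapA A)ˣ => show A from (u : WrapA A)) hu
  have hSP0 : SP 0 = e := by
    have hu : SPu 0 = 1 := by
      rw [hSPudef]
      simp
    exact congrArg (fun u : (WrapA A)ˣ => show A from (u : WrapA A)) hu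
  have hSP_step : ∀ (n : Fin m → ℤ) (j : Fin m) (v : ℤ),
      SP n = s (SP (Function.update n j v)) (show A from ((X j ^ (n j - v) : (WrapA A)ˣ) : WrapA A)) := by
    intro n j v
    have hu : SPu n = SPu (Function.update n j v) * X j ^ (n j - v) := by
      rw [hSPudef]
      exact prod_zpow_update X n j v
    exact congrArg (fun u : (WrapA A)ˣ => show A from (u : WrapA A)) hu
  -- the key estimate ‖SP n - P n‖ ≤ c ρ(n)
  have main : ∀ N : ℕ, ∀ n : Fin m → ℤ, (∑ j', (n j').natAbs) = N →
      ‖SP n - Pmon x n‖ ≤ c * rho r₁ r₂ n := by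
    intro N
    induction N with
    | zero =>
      intro n hn
      have hn0 : n = 0 := by
        funext j'
        have := Finset.sum_eq_zero_iff.mp hn j' (Finset.mem_univ j')
        simpa [Int.natAbs_eq_zero] using this
      rw [hn0, hSP0, Pmon_zero, rho_zero, mul_one]
      exact he1
    | succ N ih =>
      intro n hn
      have hex : ∃ j', n j' ≠ 0 := by
        by_contra hno
        push_neg at hno
        rw [Finset.sum_eq_zero (fun j' _ => by rw [hno j', Int.natAbs_zero])] at hn
        exact Nat.succ_ne_zero N hn.symm
      obtain ⟨j, hj⟩ := hex
      rcases hj.lt_or_gt with hneg | hpos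
      · -- n j < 0 : go through z j
        set k := Function.update n j (n j + 1) with hkdef
        have hkj : k j = n j + 1 := Function.update_self _ _ _
        have hksum : (∑ j', (k j').natAbs) = N := by
          have h1 : (n j).natAbs + ∑ j' ∈ Finset.univ.erase j, (n j').natAbs
              = ∑ j', (n j').natAbs :=
            Finset.add_sum_erase Finset.univ (fun j' => (n j').natAbs) (Finset.mem_univ j)
          have h2 : (k j).natAbs + ∑ j' ∈ Finset.univ.erase j, (k j').natAbs
              = ∑ j', (k j').natAbs :=
            Finset.add_sum_erase Finset.univ (fun j' => (k j').natAbs) (Finset.mem_univ j)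
          have h3 : ∑ j' ∈ Finset.univ.erase j, (k j').natAbs
              = ∑ j' ∈ Finset.univ.erase j, (n j').natAbs :=
            Finset.sum_congr rfl fun j' hj' => by
              rw [hkdef, Function.update_of_ne (Finset.ne_of_mem_erase hj')]
          have h4 : (k j).natAbs + 1 = (n j).natAbs := by
            rw [hkj]; omega
          omega
        have ihk := ih k hksum
        have hSPk_le : ‖SP k‖ ≤ rho r₁ r₂ k := by
          calc ‖SP k‖ = ‖(SP k - Pmon x k) + Pmon x k‖ := by rw [sub_add_cancel]
          _ ≤ max ‖SP k - Pmon x k‖ ‖Pmon x k‖ := IsUltrametricDist.norm_add_le_max _ _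
          _ ≤ rho r₁ r₂ k := max_le
              (ihk.trans (mul_le_of_le_one_left (rho_pos r₁ r₂ k).le hc1.le))
              (le_of_eq (hPnorm k))
        have hstep : SP n = s (SP k) (z j) := by
          have h5 : (X j ^ (n j - (n j + 1)) : (WrapA A)ˣ) = (X j)⁻¹ := by
            have : n j - (n j + 1) = -1 := by ring
            rw [this, zpow_neg, zpow_one]
          have := hSP_step n j (n j + 1)
          rw [h5] at this
          exact this
        have hPstep : Pmon x n = Pmon x k * (((x j)⁻¹ : Aˣ) : A) := by
          have h5 : (x j ^ (n j - (n j + 1)) : Aˣ) = (x j)⁻¹ := by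
            have : n j - (n j + 1) = -1 := by ring
            rw [this, zpow_neg, zpow_one]
          have := Pmon_update x n j (n j + 1)
          rw [h5] at this
          exact this
        have hrho : rho r₁ r₂ n = rho r₁ r₂ k * Real.exp (r₂ j) :=
          rho_update_neg (hr₁ j) (hr₂ j) (by omega)
        have hsplit : SP n - Pmon x n
            = ((s (SP k) (z j) - SP k * z j) + (SP k - Pmon x k) * z j)
              + Pmon x k * (z j - (((x j)⁻¹ : Aˣ) : A)) := by
          rw [hstep, hPstep]
          ring
        rw [hsplit, hrho]
        have hb : 0 ≤ c * (rho r₁ r₂ k * Real.exp (r₂ j)) := by positivity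
        refine (IsUltrametricDist.norm_add_le_max _ _).trans (max_le ((IsUltrametricDist.norm_add_le_max _ _).trans (max_le ?_ ?_)) ?_)
        · calc ‖s (SP k) (z j) - SP k * z j‖ ≤ c * ‖SP k * z j‖ := key _ _
          _ ≤ c * (rho r₁ r₂ k * Real.exp (r₂ j)) :=
              mul_le_mul_of_nonneg_left ((norm_mul_le _ _).trans
                (mul_le_mul hSPk_le (hz_le j) (norm_nonneg _) (rho_pos r₁ r₂ k).le)) hc0.le
        · calc ‖(SP k - Pmon x k) * z j‖ ≤ ‖SP k - Pmon x k‖ * ‖z j‖ := norm_mul_le _ _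
          _ ≤ (c * rho r₁ r₂ k) * Real.exp (r₂ j) :=
              mul_le_mul ihk (hz_le j) (norm_nonneg _) (by positivity)
          _ = c * (rho r₁ r₂ k * Real.exp (r₂ j)) := by ring
        · calc ‖Pmon x k * (z j - (((x j)⁻¹ : Aˣ) : A))‖
              ≤ ‖Pmon x k‖ * ‖z j - (((x j)⁻¹ : Aˣ) : A)‖ := norm_mul_le _ _
          _ ≤ rho r₁ r₂ k * (c * Real.exp (r₂ j)) := by
              rw [hPnorm k]
              exact mul_le_mul_of_nonneg_left (hz_close j) (rho_pos r₁ r₂ k).le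
          _ = c * (rho r₁ r₂ k * Real.exp (r₂ j)) := by ring
      · -- 0 < n j : go through x j
        set k := Function.update n j (n j - 1) with hkdef
        have hkj : k j = n j - 1 := Function.update_self _ _ _
        have hksum : (∑ j', (k j').natAbs) = N := by
          have h1 : (n j).natAbs + ∑ j' ∈ Finset.univ.erase j, (n j').natAbs
              = ∑ j', (n j').natAbs :=
            Finset.add_sum_erase Finset.univ (fun j' => (n j').natAbs) (Finset.mem_univ j)
          have h2 : (k j).natAbs + ∑ j' ∈ Finset.univ.erase j, (k j').natAbs
              = ∑ j', (k j').natAbs :=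
            Finset.add_sum_erase Finset.univ (fun j' => (k j').natAbs) (Finset.mem_univ j)
          have h3 : ∑ j' ∈ Finset.univ.erase j, (k j').natAbs
              = ∑ j' ∈ Finset.univ.erase j, (n j').natAbs :=
            Finset.sum_congr rfl fun j' hj' => by
              rw [hkdef, Function.update_of_ne (Finset.ne_of_mem_erase hj')]
          have h4 : (k j).natAbs + 1 = (n j).natAbs := by
            rw [hkj]; omega
          omega
        have ihk := ih k hksum
        have hSPk_le : ‖SP k‖ ≤ rho r₁ r₂ k := by
          calc ‖SP k‖ = ‖(SP k - Pmon x k) + Pmon x k‖ := by rw [sub_add_cancel]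
          _ ≤ max ‖SP k - Pmon x k‖ ‖Pmon x k‖ := IsUltrametricDist.norm_add_le_max _ _
          _ ≤ rho r₁ r₂ k := max_le
              (ihk.trans (mul_le_of_le_one_left (rho_pos r₁ r₂ k).le hc1.le))
              (le_of_eq (hPnorm k))
        have hstep : SP n = s (SP k) ((x j : Aˣ) : A) := by
          have h5 : (X j ^ (n j - (n j - 1)) : (WrapA A)ˣ) = X j := by
            have : n j - (n j - 1) = 1 := by ring
            rw [this, zpow_one]
          have := hSP_step n j (n j - 1)
          rw [h5] at this
          exact this
        have hPstep : Pmon x n = Pmon x k * ((x j : Aˣ) : A) := by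
          have h5 : (x j ^ (n j - (n j - 1)) : Aˣ) = x j := by
            have : n j - (n j - 1) = 1 := by ring
            rw [this, zpow_one]
          have := Pmon_update x n j (n j - 1)
          rw [h5] at this
          exact this
        have hrho : rho r₁ r₂ n = rho r₁ r₂ k * Real.exp (r₁ j) :=
          rho_update_pos (hr₁ j) (hr₂ j) (by omega)
        have hsplit : SP n - Pmon x n
            = (s (SP k) ((x j : Aˣ) : A) - SP k * ((x j : Aˣ) : A))
              + (SP k - Pmon x k) * ((x j : Aˣ) : A) := by
          rw [hstep, hPstep]
          ring
        rw [hsplit, hrho]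
        refine (IsUltrametricDist.norm_add_le_max _ _).trans (max_le ?_ ?_)
        · calc ‖s (SP k) ((x j : Aˣ) : A) - SP k * ((x j : Aˣ) : A)‖
              ≤ c * ‖SP k * ((x j : Aˣ) : A)‖ := key _ _
          _ ≤ c * (rho r₁ r₂ k * Real.exp (r₁ j)) := by
              refine mul_le_mul_of_nonneg_left ((norm_mul_le _ _).trans ?_) hc0.le
              rw [hxnorm j]
              exact mul_le_mul_of_nonneg_right hSPk_le (Real.exp_pos _).le
        · calc ‖(SP k - Pmon x k) * ((x j : Aˣ) : A)‖
              ≤ ‖SP k - Pmon x k‖ * ‖((x j : Aˣ) : A)‖ := norm_mul_le _ _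
          _ ≤ (c * rho r₁ r₂ k) * Real.exp (r₁ j) := by
              rw [hxnorm j]
              exact mul_le_mul_of_nonneg_right ihk (Real.exp_pos _).le
          _ = c * (rho r₁ r₂ k * Real.exp (r₁ j)) := by ring
  have hmain : ∀ n, ‖SP n - Pmon x n‖ ≤ c * rho r₁ r₂ n := fun n => main _ n rfl
  have hSP_le : ∀ n, ‖SP n‖ ≤ rho r₁ r₂ n := by
    intro n
    calc ‖SP n‖ = ‖(SP n - Pmon x n) + Pmon x n‖ := by rw [sub_add_cancel]
    _ ≤ max ‖SP n - Pmon x n‖ ‖Pmon x n‖ := IsUltrametricDist.norm_add_le_max _ _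
    _ ≤ rho r₁ r₂ n := max_le
        ((hmain n).trans (mul_le_of_le_one_left (rho_pos r₁ r₂ n).le hc1.le))
        (le_of_eq (hPnorm n))
  -- coefficient functionals
  set coef : A → (Fin m → ℤ) → K := fun u => (hexp u).choose with hcoefdef
  have hcoef : ∀ u : A, HasSum (fun n => coef u n • Pmon x n) u :=
    fun u => (hexp u).choose_spec.1
  have hcoef_unique : ∀ (u : A) (a : (Fin m → ℤ) → K),
      HasSum (fun n => a n • Pmon x n) u → a = coef u :=
    fun u a ha => (hexp u).choose_spec.2 a ha
  have hcoef_bound : ∀ (u : A) n, ‖coef u n‖ * rho r₁ r₂ n ≤ ‖u‖ :=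
    fun u n => (hnorm u (coef u) (hcoef u)).1 ⟨n, rfl⟩
  -- the map φ
  have hsummable : ∀ u : A, Summable (fun n => coef u n • SP n) := by
    intro u
    apply NonarchimedeanAddGroup.summable_of_tendsto_cofinite_zero
    have h1 : Filter.Tendsto (fun n => coef u n • Pmon x n) Filter.cofinite (nhds 0) :=
      (hcoef u).summable.tendsto_cofinite_zero
    have h2 : Filter.Tendsto (fun n => ‖coef u n‖ * rho r₁ r₂ n) Filter.cofinite (nhds 0) := by
      have h3 := tendsto_zero_iff_norm_tendsto_zero.mp h1
      simp only [norm_smul, hPnorm] at h3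
      exact h3
    refine squeeze_zero_norm (fun n => ?_) h2
    rw [norm_smul]
    exact mul_le_mul_of_nonneg_left (hSP_le n) (norm_nonneg _)
  set F : A → A := fun u => ∑' n, coef u n • SP n with hFdef
  have hFsum : ∀ u : A, HasSum (fun n => coef u n • SP n) (F u) :=
    fun u => (hsummable u).hasSum
  have hFclose : ∀ u : A, ‖F u - u‖ ≤ c * ‖u‖ := by
    intro u
    have hdiff : HasSum (fun n => coef u n • (SP n - Pmon x n)) (F u - u) := by
      have h1 := (hFsum u).sub (hcoef u)
      have heq : (fun n => coef u n • SP n - coef u n • Pmon x n)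
          = fun n => coef u n • (SP n - Pmon x n) := funext fun n => (smul_sub _ _ _).symm
      rwa [heq] at h1
    refine norm_hasSum_le hdiff (by positivity) fun n => ?_
    rw [norm_smul]
    calc ‖coef u n‖ * ‖SP n - Pmon x n‖ ≤ ‖coef u n‖ * (c * rho r₁ r₂ n) :=
        mul_le_mul_of_nonneg_left (hmain n) (norm_nonneg _)
    _ = c * (‖coef u n‖ * rho r₁ r₂ n) := by ring
    _ ≤ c * ‖u‖ := mul_le_mul_of_nonneg_left (hcoef_bound u n) hc0.le
  have hcoef_add : ∀ u v : A, (fun n => coef u n + coef v n) = coef (u + v) := by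
    intro u v
    refine hcoef_unique (u + v) _ ?_
    have h1 := (hcoef u).add (hcoef v)
    have heq : (fun n => coef u n • Pmon x n + coef v n • Pmon x n)
        = fun n => (coef u n + coef v n) • Pmon x n := funext fun n => (add_smul _ _ _).symm
    rwa [heq] at h1
  have hFadd : ∀ u v : A, F (u + v) = F u + F v := by
    intro u v
    have h1 := (hFsum u).add (hFsum v)
    have heq : (fun n => coef u n • SP n + coef v n • SP n)
        = fun n => coef (u + v) n • SP n := by
      funext n
      rw [← add_smul, ← hcoef_add u v]
    rw [heq] at h1
    exact (hFsum (u + v)).unique h1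
  have hcoef_smul : ∀ (a : K) (u : A), (fun n => a * coef u n) = coef (a • u) := by
    intro a u
    refine hcoef_unique (a • u) _ ?_
    have h1 := (hcoef u).const_smul a
    have heq : (fun n => a • (coef u n • Pmon x n))
        = fun n => (a * coef u n) • Pmon x n := funext fun n => (smul_smul _ _ _)
    rwa [heq] at h1
  have hFsmul : ∀ (a : K) (u : A), F (a • u) = a • F u := by
    intro a u
    have h1 := (hFsum u).const_smul a
    have heq : (fun n => a • (coef u n • SP n))
        = fun n => coef (a • u) n • SP n := by
      funext n
      rw [smul_smul, ← hcoef_smul a u]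
    rw [heq] at h1
    exact (hFsum (a • u)).unique h1
  set φ : A →ₗ[K] A :=
    { toFun := F, map_add' := hFadd, map_smul' := fun a u => hFsmul a u } with hφdef
  have hFiso : ∀ u : A, ‖F u‖ = ‖u‖ := by
    intro u
    rcases eq_or_ne u 0 with rfl | hu
    · have : F 0 = 0 := map_zero φ
      rw [this]
    · exact norm_eq_of_close ((hFclose u).trans_lt
        (mul_lt_of_lt_one_left (norm_pos_iff.2 hu) hc1))
  have hFcont : Continuous F := by
    have : Isometry F := by
      refine Isometry.of_dist_eq fun u v => ?_
      rw [dist_eq_norm, dist_eq_norm]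
      have h1 : F u - F v = F (u - v) := (map_sub φ u v).symm
      rw [h1, hFiso]
    exact this.continuous
  have hFinj : Function.Injective F := by
    intro u v huv
    have hsub : F (u - v) = F u - F v := map_sub φ u v
    have h1 : F (u - v) = 0 := by rw [hsub, huv, sub_self]
    have h2 := hFiso (u - v)
    rw [h1, norm_zero] at h2
    exact sub_eq_zero.1 (norm_eq_zero.1 h2.symm)
  have hFsurj : Function.Surjective F :=
    fun b => surj_of_close F hFadd hFcont hc0.le hc1 hFclose b
  -- F sends monomials to ∗-monomials
  have hφP : ∀ n, F (Pmon x n) = SP n := by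
    intro n
    have hind : (fun k' => if k' = n then (1:K) else 0) = coef (Pmon x n) :=
      hcoef_unique (Pmon x n) _ (hsum_ind n)
    have h1 : (fun k' => coef (Pmon x n) k' • SP k')
        = fun k' => if k' = n then SP n else 0 := by
      funext k'
      rw [← hind]
      by_cases h : k' = n
      · subst h; simp
      · simp [h]
    calc F (Pmon x n) = ∑' k', coef (Pmon x n) k' • SP k' := rfl
    _ = SP n := by rw [h1]; exact (hasSum_ite_eq n (SP n)).tsum_eq
  have hPmul_mono : ∀ n k', F (Pmon x n * Pmon x k') = s (F (Pmon x n)) (F (Pmon x k')) := by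
    intro n k'
    rw [Pmon_mul x n k', hφP, hφP, hφP]
    exact hSPadd n k'
  -- density of the span of monomials
  have hdense : Dense ((Submodule.span K (Set.range (Pmon x)) : Submodule K A) : Set A) := by
    intro u
    refine mem_closure_of_tendsto (hcoef u) (Filter.Eventually.of_forall fun t => ?_)
    exact Submodule.sum_mem _ fun n _ => Submodule.smul_mem _ _ (Submodule.subset_span ⟨n, rfl⟩)
  -- multiplicativity, first in the second variable against a fixed monomial
  have hstep1 : ∀ n (v : A), F (Pmon x n * v) = s (F (Pmon x n)) (F v) := by
    intro n
    have hspan : ∀ v ∈ Submodule.span K (Set.range (Pmon x)),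
        F (Pmon x n * v) = s (F (Pmon x n)) (F v) := by
      have hbase : Set.EqOn (φ.comp (LinearMap.mulLeft K (Pmon x n)))
          (((s (F (Pmon x n))).toLinearMap).comp φ) (Set.range (Pmon x)) := by
        rintro _ ⟨k', rfl⟩
        exact hPmul_mono n k'
      exact fun v hv => LinearMap.eqOn_span hbase hv
    have hcont1 : Continuous fun v => F (Pmon x n * v) :=
      hFcont.comp (continuous_const.mul continuous_id)
    have hcont2 : Continuous fun v => s (F (Pmon x n)) (F v) :=
      (s (F (Pmon x n))).continuous.comp hFcont
    have := Continuous.ext_on hdense hcont1 hcont2 fun v hv => hspan v hv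
    exact fun v => congrFun this v
  -- then in the first variable
  have hmul : ∀ u v : A, F (u * v) = s (F u) (F v) := by
    intro u v
    have hspan : ∀ w ∈ Submodule.span K (Set.range (Pmon x)),
        F (w * v) = s (F v) (F w) := by
      have hbase : Set.EqOn (φ.comp (LinearMap.mulRight K v))
          (((s (F v)).toLinearMap).comp φ) (Set.range (Pmon x)) := by
        rintro _ ⟨k', rfl⟩
        show F (Pmon x k' * v) = s (F v) (F (Pmon x k'))
        rw [hstep1 k' v]
        exact scomm _ _
      exact fun w hw => LinearMap.eqOn_span hbase hw
    have hcont1 : Continuous fun w => F (w * v) :=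
      hFcont.comp (continuous_id.mul continuous_const)
    have hcont2 : Continuous fun w => s (F v) (F w) :=
      (s (F v)).continuous.comp hFcont
    have hall := Continuous.ext_on hdense hcont1 hcont2 fun w hw => hspan w hw
    have := congrFun hall u
    rw [this]
    exact scomm _ _
  exact ⟨φ, ⟨hFinj, hFsurj⟩, hFiso, hmul, hFclose⟩
end

section
/- Let (A,·) be a commutative nonarchimedean Banach algebra over K whose norm is multiplicative: ‖x·y‖ = ‖x‖·‖y‖ for all x,y ∈ A. Let c ∈ (0,1) and let ∗ be a c-close product on A. Then for every n ≥ 2 and all a₁,…,aₙ ∈ A with a₁·…·aₙ ≠ 0, the n-fold ∗-product satisfies ‖(⋯(a₁∗a₂)∗⋯)∗aₙ − a₁·…·aₙ‖ < c·‖a₁·…·aₙ‖. -/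
private lemma nfold_aux
    {K : Type*} [NormedField K]
    {A : Type*} [NormedCommRing A] [NormedAlgebra K A]
    [IsUltrametricDist A]
    (hmul : ∀ x y : A, ‖x * y‖ = ‖x‖ * ‖y‖)
    (c : ℝ) (hc1 : c < 1)
    (m : A →L[K] A →L[K] A) (hm : IsCCloseProduct c m) :
    ∀ (l : List A) (u x : A), x * l.prod ≠ 0 → ‖u - x‖ < c * ‖x‖ →
      ‖l.foldl (fun u v => m u v) u - x * l.prod‖ < c * ‖x * l.prod‖ := by
  intro l
  induction l with
  | nil => intro u x _ h; simpa using h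
  | cons v t ih =>
    intro u x hx0 hu
    have hx : x ≠ 0 := by
      intro h; apply hx0; rw [h, zero_mul]
    have hxn : (0:ℝ) < ‖x‖ := norm_pos_iff.mpr hx
    -- ‖u‖ = ‖x‖
    have hux : ‖u - x‖ < ‖x‖ := lt_of_lt_of_le hu (by nlinarith)
    have hnu : ‖u‖ = ‖x‖ := by
      have h1 : ‖u‖ ≤ ‖x‖ := by
        calc ‖u‖ = ‖(u - x) + x‖ := by ring_nf
          _ ≤ max ‖u - x‖ ‖x‖ := IsUltrametricDist.norm_add_le_max _ _
          _ ≤ ‖x‖ := max_le hux.le le_rfl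
      have h2 : ‖x‖ ≤ ‖u‖ := by
        by_contra h
        push_neg at h
        have : ‖x‖ ≤ max ‖x - u‖ ‖u‖ := by
          calc ‖x‖ = ‖(x - u) + u‖ := by ring_nf
            _ ≤ max ‖x - u‖ ‖u‖ := IsUltrametricDist.norm_add_le_max _ _
        rw [norm_sub_rev] at this
        have := le_max_iff.mp this
        rcases this with h' | h'
        · exact absurd (lt_of_le_of_lt h' hux) (lt_irrefl _)
        · exact absurd (lt_of_le_of_lt h' h) (lt_irrefl _)
      linarith
    have hv : v ≠ 0 := by
      intro h; apply hx0; simp [h]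
    have hvn : (0:ℝ) < ‖v‖ := norm_pos_iff.mpr hv
    have hxv : x * v ≠ 0 := by
      intro h
      have : ‖x * v‖ = 0 := by rw [h, norm_zero]
      rw [hmul] at this
      nlinarith
    have huv : u * v ≠ 0 := by
      intro h
      have : ‖u * v‖ = 0 := by rw [h, norm_zero]
      rw [hmul, hnu] at this
      nlinarith
    -- ‖m u v - x*v‖ < c‖x*v‖
    have hmcl : ‖m u v - u * v‖ < c * ‖u * v‖ := hm.2.2.1 u v huv
    have key : ‖(m u v) - x * v‖ < c * ‖x * v‖ := by
      have h1 : ‖u * v - x * v‖ < c * ‖x * v‖ := by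
        rw [show u * v - x * v = (u - x) * v by ring, hmul, hmul]
        calc ‖u - x‖ * ‖v‖ < (c * ‖x‖) * ‖v‖ := by nlinarith
          _ = c * (‖x‖ * ‖v‖) := by ring
      have h2 : ‖m u v - u * v‖ < c * ‖x * v‖ := by
        rwa [hmul, hnu, ← hmul] at hmcl
      calc ‖(m u v) - x * v‖ = ‖(m u v - u * v) + (u * v - x * v)‖ := by ring_nf
        _ ≤ max ‖m u v - u * v‖ ‖u * v - x * v‖ := IsUltrametricDist.norm_add_le_max _ _
        _ < c * ‖x * v‖ := max_lt h2 h1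
    have hx0' : (x * v) * t.prod ≠ 0 := by
      rwa [mul_assoc, ← List.prod_cons]
    have := ih (m u v) (x * v) hx0' key
    simpa [List.prod_cons, mul_assoc] using this

/-- Let `A` be a commutative nonarchimedean Banach algebra over `K`
whose norm is multiplicative, `c ∈ (0,1)` and `∗` a `c`-close product on `A`. Then for
every `n ≥ 2` and all `a₁, …, aₙ ∈ A` with `a₁·…·aₙ ≠ 0`, the left-associated `n`-fold
`∗`-product satisfies `‖(⋯(a₁∗a₂)∗⋯)∗aₙ − a₁·…·aₙ‖ < c·‖a₁·…·aₙ‖`. (An `n`-tuple with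
`n ≥ 2` is encoded as `a`, `b` and a list `l` with `n = 2 + l.length`.) -/
theorem nfold_close_product
    {K : Type*} [NormedField K] [IsUltrametricDist K] [CompleteSpace K]
    {A : Type*} [NormedCommRing A] [NormedAlgebra K A] [CompleteSpace A]
    [IsUltrametricDist A]
    (hmul : ∀ x y : A, ‖x * y‖ = ‖x‖ * ‖y‖)
    (c : ℝ) (hc0 : 0 < c) (hc1 : c < 1)
    (m : A →L[K] A →L[K] A) (hm : IsCCloseProduct c m) :
    ∀ (a b : A) (l : List A), a * b * l.prod ≠ 0 →
      ‖l.foldl (fun u v => m u v) (m a b) - a * b * l.prod‖ < c * ‖a * b * l.prod‖ := by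
  intro a b l h
  have hab : a * b ≠ 0 := by
    intro h'; apply h; rw [h', zero_mul]
  exact nfold_aux hmul c hc1 m hm l (m a b) (a * b) h (hm.2.2.1 a b hab)
end
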